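/- arXiv:1910.10984 — 8 statements merged into one kernel-verified Lean document; each statement's English description precedes it below -/
import Mathlib

section
/- For every finite abelian group G with subgroup H, the Davenport constant satisfies D(G) ≤ D_{D(H)}(G/H), where D_m denotes the m-th Davenport constant. -/
/-!
Take a sequence `S` over `G` of length at least `D_{D(H)}(G/H)`. Its image in `G/H` contains
`D(H)` disjoint non-empty zero-sum subsequences; lifting them back gives `D(H)` disjoint blocks of
`S` whose sums lie in `H`. The sequence of these block sums, a sequence over `H` of length `D(H)`,
has a non-empty zero-sum subsequence, and the union of the corresponding blocks is a non-empty
zero-sum subsequence of `S`.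
-/

/-- The `m`-th Davenport constant: smallest `t` such that every sequence (multiset) over `G`
of length `≥ t` contains `m` disjoint non-empty zero-sum subsequences. -/
noncomputable def DavenportM (G : Type*) [AddCommGroup G] (m : ℕ) : ℕ :=
  sInf {t | ∀ S : Multiset G, t ≤ Multiset.card S →
    ∃ L : Multiset (Multiset G), Multiset.card L = m ∧
      (∀ T ∈ L, T ≠ 0 ∧ T.sum = 0) ∧ L.sum ≤ S}

/-- The Davenport constant: smallest `t` such that every sequence over `G` of length `≥ t`
has a non-empty zero-sum subsequence. -/
noncomputable def Davenport (G : Type*) [AddCommGroup G] : ℕ :=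
  sInf {t | ∀ S : Multiset G, t ≤ Multiset.card S → ∃ T ≤ S, T ≠ 0 ∧ T.sum = 0}

/-- `η(G)`: smallest `t` such that every sequence over `G` of length `≥ t` has a non-empty
zero-sum subsequence of length at most `exp G`. -/
noncomputable def etaC (G : Type*) [AddCommGroup G] : ℕ :=
  sInf {t | ∀ S : Multiset G, t ≤ Multiset.card S →
    ∃ T ≤ S, T ≠ 0 ∧ T.sum = 0 ∧ Multiset.card T ≤ AddMonoid.exponent G}

/-- The Erdős–Ginzburg–Ziv constant `s(G)`: smallest `t` such that every sequence over `G` of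
length `≥ t` has a zero-sum subsequence of length exactly `exp G`. -/
noncomputable def egz (G : Type*) [AddCommGroup G] : ℕ :=
  sInf {t | ∀ S : Multiset G, t ≤ Multiset.card S →
    ∃ T ≤ S, T.sum = 0 ∧ Multiset.card T = AddMonoid.exponent G}

namespace Multiset

variable {α β : Type*}

theorem exists_le_map_eq_of_le_map {f : α → β} {M : Multiset β} {S : Multiset α}
    (h : M ≤ S.map f) : ∃ M' ≤ S, M'.map f = M := by
  induction M using Quotient.inductionOn
  induction S using Quotient.inductionOn
  obtain ⟨m', hperm, hsub⟩ := h
  obtain ⟨l', hl', rfl⟩ := List.sublist_map_iff.mp hsub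
  exact ⟨l', hl'.subperm, Quotient.sound hperm⟩

theorem exists_map_map_eq_of_sum_le_map {f : α → β} {L : Multiset (Multiset β)}
    {S : Multiset α} (h : L.sum ≤ S.map f) :
    ∃ L' : Multiset (Multiset α), L'.map (map f) = L ∧ L'.sum ≤ S := by
  classical
  induction L using Multiset.induction generalizing S with
  | empty => exact ⟨0, rfl, zero_le S⟩
  | cons T L ih =>
    rw [sum_cons] at h
    obtain ⟨T', hT'S, rfl⟩ := exists_le_map_eq_of_le_map (le_of_add_le_left h)
    have hrest : L.sum ≤ (S - T').map f := by
      rw [← add_tsub_cancel_of_le hT'S, map_add] at h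
      exact le_of_add_le_add_left h
    obtain ⟨L', rfl, hL'⟩ := ih hrest
    exact ⟨T' ::ₘ L', map_cons _ _ _, by
      rw [sum_cons, ← add_tsub_cancel_of_le hT'S]; exact add_le_add le_rfl hL'⟩

theorem exists_lt_count_of_mul_card_lt [Fintype α] [DecidableEq α] {k : ℕ} {S : Multiset α}
    (h : k * Fintype.card α < card S) : ∃ a, k < count a S := by
  by_contra! hle
  have : card S ≤ Fintype.card α * k := by
    rw [← sum_count_eq_card (s := Finset.univ) (fun a _ => Finset.mem_univ a)]
    simpa using Finset.sum_le_sum fun a (_ : a ∈ Finset.univ) => hle a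
  linarith

end Multiset

open Multiset

section

variable {G : Type*} [AddCommGroup G]

theorem exists_replicate_addOrderOf_le [Finite G] {k : ℕ} {S : Multiset G}
    (h : k * Nat.card G * Nat.card G < card S) :
    ∃ g : G, replicate (k * addOrderOf g) g ≤ S := by
  classical
  have := Fintype.ofFinite G
  rw [Nat.card_eq_fintype_card] at h
  obtain ⟨g, hg⟩ := exists_lt_count_of_mul_card_lt h
  have hord : addOrderOf g ≤ Fintype.card G :=
    Nat.card_eq_fintype_card (α := G) ▸ addOrderOf_le_card
  exact ⟨g, le_count_iff_replicate_le.mp ((Nat.mul_le_mul_left k hord).trans hg.le)⟩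

theorem exists_zeroSum_blocks_of_davenportM_le [Finite G] {m : ℕ} {S : Multiset G}
    (h : DavenportM G m ≤ card S) :
    ∃ L : Multiset (Multiset G), card L = m ∧ (∀ T ∈ L, T ≠ 0 ∧ T.sum = 0) ∧ L.sum ≤ S := by
  -- `sInf ∅ = 0`, so the defining set must be shown non-empty: a long enough sequence
  -- repeats some `g` at least `m * addOrderOf g` times, giving `m` zero-sum blocks `g, …, g`.
  suffices hne : ∃ t, ∀ S : Multiset G, t ≤ card S → ∃ L : Multiset (Multiset G),
      card L = m ∧ (∀ T ∈ L, T ≠ 0 ∧ T.sum = 0) ∧ L.sum ≤ S from Nat.sInf_mem hne S h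
  refine ⟨m * Nat.card G * Nat.card G + 1, fun S hS => ?_⟩
  obtain ⟨g, hg⟩ := exists_replicate_addOrderOf_le hS
  refine ⟨replicate m (replicate (addOrderOf g) g), card_replicate _ _, fun T hT => ?_, ?_⟩
  · rw [eq_of_mem_replicate hT]
    exact ⟨by rw [Ne, ← card_eq_zero, card_replicate]; exact (addOrderOf_pos g).ne',
      by simp [addOrderOf_nsmul_eq_zero]⟩
  · simpa [nsmul_replicate] using hg

theorem exists_zeroSum_of_davenport_le [Finite G] {S : Multiset G} (h : Davenport G ≤ card S) :
    ∃ T ≤ S, T ≠ 0 ∧ T.sum = 0 := by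
  suffices hne : ∃ t, ∀ S : Multiset G, t ≤ card S → ∃ T ≤ S, T ≠ 0 ∧ T.sum = 0 from
    Nat.sInf_mem hne S h
  refine ⟨DavenportM G 1, fun S hS => ?_⟩
  obtain ⟨L, hL, hzero, hLS⟩ := exists_zeroSum_blocks_of_davenportM_le hS
  obtain ⟨T, rfl⟩ := card_eq_one.mp hL
  exact ⟨T, by simpa using hLS, hzero T (mem_singleton_self T)⟩

theorem exists_zeroSum_of_davenport_addSubgroup_le {H : AddSubgroup G} [Finite H]
    {S : Multiset G} (hS : ∀ x ∈ S, x ∈ H) (h : Davenport H ≤ card S) :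
    ∃ T ≤ S, T ≠ 0 ∧ T.sum = 0 := by
  lift S to Multiset H using hS
  obtain ⟨T, hTS, hT0, hTsum⟩ := exists_zeroSum_of_davenport_le (by simpa using h)
  refine ⟨T.map (↑), map_le_map hTS, by simpa using hT0, ?_⟩
  simpa [hTsum] using (map_multiset_sum H.subtype T).symm

theorem exists_zeroSum_le_sum_of_blocks {H : AddSubgroup G} [Finite H]
    {L : Multiset (Multiset G)} (hL : ∀ T ∈ L, T ≠ 0 ∧ T.sum ∈ H)
    (hcard : Davenport H ≤ card L) : ∃ T ≤ L.sum, T ≠ 0 ∧ T.sum = 0 := by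
  obtain ⟨T, hT, hT0, hTsum⟩ := exists_zeroSum_of_davenport_addSubgroup_le (S := L.map sum)
    (by simpa using fun T hT => (hL T hT).2) (by simpa using hcard)
  obtain ⟨U, hUL, rfl⟩ := exists_le_map_eq_of_le_map hT
  obtain ⟨V, rfl⟩ := exists_add_of_le hUL
  obtain ⟨B, hB⟩ := exists_mem_of_ne_zero (by simpa using hT0)
  refine ⟨U.sum, by simp, ?_, sum_join.trans hTsum⟩
  rw [Ne, sum_eq_zero_iff]
  exact fun h => (hL B (mem_add.mpr (Or.inl hB))).1 (h B hB)

end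

theorem stmt_0 (G : Type*) [AddCommGroup G] [Fintype G] (H : AddSubgroup G) :
    Davenport G ≤ DavenportM (G ⧸ H) (Davenport H) := by
  refine Nat.sInf_le fun S hS => ?_
  obtain ⟨L, hLcard, hL, hLS⟩ :=
    exists_zeroSum_blocks_of_davenportM_le (S := S.map ((↑) : G → G ⧸ H)) (by simpa using hS)
  obtain ⟨L', rfl, hL'S⟩ := exists_map_map_eq_of_sum_le_map hLS
  have hblocks : ∀ T ∈ L', T ≠ 0 ∧ T.sum ∈ H := fun T hT => by
    obtain ⟨hT0, hTsum⟩ := hL _ (mem_map_of_mem _ hT)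
    refine ⟨by simpa using hT0, ?_⟩
    rw [← QuotientAddGroup.eq_zero_iff, ← hTsum]
    exact map_multiset_sum (QuotientAddGroup.mk' H) T
  obtain ⟨T, hT, hT0, hTsum⟩ :=
    exists_zeroSum_le_sum_of_blocks hblocks (by simpa using hLcard.ge)
  exact ⟨T, hT.trans hL'S, hT0, hTsum⟩
end

section
/- For every finite abelian group G and every natural number k ≥ 1, D_k(G) ≤ exp(G)·(k−1) + η(G). -/
/-!
Peel off a short zero-sum subsequence of length at most `exp G`: what remains has lost at most
`exp G` terms, so by induction a sequence of length `exp G * (k - 1) + η(G)` still yields `k`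
disjoint non-empty zero-sum subsequences. That `η(G)` itself is attained needs only that some
finite threshold works, which pigeonhole provides: among `|G| * (exp G - 1) + 1` terms some
element occurs `exp G` times.
-/

open Multiset

theorem Multiset.exists_lt_count_of_card_mul_lt {α : Type*} [Fintype α] [DecidableEq α]
    {s : Multiset α} {n : ℕ} (h : Fintype.card α * n < card s) : ∃ a, n < s.count a := by
  have hsum : ∑ _a : α, n < ∑ a, s.count a := by
    rwa [sum_count_eq_card fun a _ => Finset.mem_univ a, Finset.sum_const, Finset.card_univ,
      smul_eq_mul]
  obtain ⟨a, -, ha⟩ := Finset.exists_lt_of_sum_lt hsum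
  exact ⟨a, ha⟩

section ShortZeroSum

variable {G : Type*} [AddCommGroup G]

theorem exists_short_zero_sum_of_card_mul_lt [Fintype G] {S : Multiset G}
    (hS : Fintype.card G * (AddMonoid.exponent G - 1) < card S) :
    ∃ T ≤ S, T ≠ 0 ∧ T.sum = 0 ∧ card T ≤ AddMonoid.exponent G := by
  classical
  have hexp : 0 < AddMonoid.exponent G := Nat.pos_of_ne_zero AddMonoid.exponent_ne_zero_of_finite
  obtain ⟨g, hg⟩ := S.exists_lt_count_of_card_mul_lt hS
  refine ⟨replicate (AddMonoid.exponent G) g, le_count_iff_replicate_le.mp (by omega), ?_, ?_, ?_⟩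
  · simpa [← card_eq_zero] using hexp.ne'
  · simp [AddMonoid.exponent_nsmul_eq_zero]
  · simp

theorem exists_short_zero_sum_of_etaC_le [Finite G] {S : Multiset G} (hS : etaC G ≤ card S) :
    ∃ T ≤ S, T ≠ 0 ∧ T.sum = 0 ∧ card T ≤ AddMonoid.exponent G := by
  have := Fintype.ofFinite G
  have hne : {t | ∀ S : Multiset G, t ≤ card S →
      ∃ T ≤ S, T ≠ 0 ∧ T.sum = 0 ∧ card T ≤ AddMonoid.exponent G}.Nonempty :=
    ⟨_, fun _ h => exists_short_zero_sum_of_card_mul_lt (Nat.lt_of_succ_le h)⟩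
  exact Nat.sInf_mem hne S hS

end ShortZeroSum

theorem exists_disjoint_zero_sums_of_card_ge {M : Type*} [AddCommMonoid M] {m t : ℕ}
    (hshort : ∀ S : Multiset M, t ≤ card S → ∃ T ≤ S, T ≠ 0 ∧ T.sum = 0 ∧ card T ≤ m)
    (k : ℕ) {S : Multiset M} (hS : m * k + t ≤ card S) :
    ∃ L : Multiset (Multiset M), card L = k + 1 ∧ (∀ T ∈ L, T ≠ 0 ∧ T.sum = 0) ∧ L.sum ≤ S := by
  classical
  induction k generalizing S with
  | zero =>
    obtain ⟨T, hTS, hT⟩ := hshort S (by simpa using hS)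
    exact ⟨{T}, rfl, by simpa using ⟨hT.1, hT.2.1⟩, by simpa using hTS⟩
  | succ k ih =>
    obtain ⟨T, hTS, hT0, hTsum, hTcard⟩ := hshort S ((Nat.le_add_left t _).trans hS)
    have hrest : m * k + t ≤ card (S - T) := by
      rw [card_sub hTS]
      have := card_le_card hTS
      rw [Nat.mul_succ] at hS
      omega
    obtain ⟨L, hLcard, hL, hLS⟩ := ih hrest
    refine ⟨T ::ₘ L, by simp [hLcard], ?_, ?_⟩
    · simpa [forall_mem_cons] using ⟨⟨hT0, hTsum⟩, hL⟩
    · rw [sum_cons]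
      exact (le_tsub_iff_left hTS).mp hLS

theorem stmt_1_general (G : Type*) [AddCommGroup G] [Fintype G] (k : ℕ) :
    DavenportM G k ≤ AddMonoid.exponent G * (k - 1) + etaC G := by
  apply Nat.sInf_le
  intro S hS
  cases k with
  | zero => exact ⟨0, rfl, by simp, by simp⟩
  | succ k =>
    exact exists_disjoint_zero_sums_of_card_ge (fun _ => exists_short_zero_sum_of_etaC_le) k
      (by simpa using hS)

theorem stmt_1 (G : Type*) [AddCommGroup G] [Fintype G] (k : ℕ) (hk : 1 ≤ k) :
    DavenportM G k ≤ AddMonoid.exponent G * (k - 1) + etaC G :=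
  stmt_1_general G k
end

section
/- For natural numbers 1 ≤ n₁ | n₂, the Davenport constant of C_{n₁} ⊕ C_{n₂} satisfies D(C_{n₁} ⊕ C_{n₂}) = n₁ + n₂ − 1. -/
namespace Dav


lemma exists_le_of_le_map {α β : Type*} [DecidableEq α] [DecidableEq β] (φ : α → β) (T : Multiset β) :
    ∀ S : Multiset α, T ≤ S.map φ → ∃ W, W ≤ S ∧ W.map φ = T := by
  induction T using Multiset.induction with
  | empty => exact fun S _ => ⟨0, zero_le, by simp⟩
  | cons a T ih =>
    intro S hle
    have ha : a ∈ S.map φ := Multiset.mem_of_le hle (Multiset.mem_cons_self a T)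
    obtain ⟨w, hwS, hwa⟩ := Multiset.mem_map.1 ha
    have h1 : T ≤ (S.map φ).erase a := by
      have := Multiset.erase_le_erase a hle
      rwa [Multiset.erase_cons_head] at this
    have h2 : (S.map φ).erase a = (S.erase w).map φ := by
      conv_lhs => rw [← Multiset.cons_erase hwS]
      rw [Multiset.map_cons, hwa, Multiset.erase_cons_head]
    obtain ⟨W, hW, hWm⟩ := ih (S.erase w) (h1.trans h2.le)
    refine ⟨w ::ₘ W, ?_, by rw [Multiset.map_cons, hwa, hWm]⟩
    rw [← Multiset.cons_erase hwS]
    exact Multiset.cons_le_cons _ hW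

lemma exists_family {α β : Type*} [DecidableEq α] [DecidableEq β] (φ : α → β) (L : Multiset (Multiset β)) :
    ∀ S : Multiset α, L.sum ≤ S.map φ →
      ∃ L' : Multiset (Multiset α), L'.map (Multiset.map φ) = L ∧ L'.sum ≤ S := by
  induction L using Multiset.induction with
  | empty => intro S _; exact ⟨0, by simp, zero_le⟩
  | cons Tq L ih =>
    intro S h
    rw [Multiset.sum_cons] at h
    have hT : Tq ≤ S.map φ := le_trans (Multiset.le_add_right _ _) h
    obtain ⟨W, hWS, hWm⟩ := exists_le_of_le_map φ Tq S hT
    have h2 : L.sum ≤ (S - W).map φ := by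
      have hsub : (S - W).map φ = S.map φ - Tq := by
        conv_rhs => rw [← tsub_add_cancel_of_le hWS, Multiset.map_add, hWm,
          add_tsub_cancel_right]
      rw [hsub]
      exact le_tsub_of_add_le_left h
    obtain ⟨L', hL'm, hL's⟩ := ih (S - W) h2
    refine ⟨W ::ₘ L', by rw [Multiset.map_cons, hWm, hL'm], ?_⟩
    rw [Multiset.sum_cons]
    calc W + L'.sum ≤ W + (S - W) := add_le_add_right hL's _
    _ = S := add_tsub_cancel_of_le hWS

lemma exists_map_eq {α β : Type*} (f : α → β) (M : Multiset β) :
    (∀ x ∈ M, ∃ u, f u = x) → ∃ M' : Multiset α, M'.map f = M := by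
  induction M using Multiset.induction with
  | empty => exact fun _ => ⟨0, by simp⟩
  | cons a M ih =>
    intro h
    obtain ⟨u, hu⟩ := h a (Multiset.mem_cons_self a M)
    obtain ⟨M', hM'⟩ := ih fun x hx => h x (Multiset.mem_cons_of_mem hx)
    exact ⟨u ::ₘ M', by rw [Multiset.map_cons, hu, hM']⟩

lemma msum_sum {G : Type*} [AddCommMonoid G] (L : Multiset (Multiset G)) :
    L.sum.sum = (L.map Multiset.sum).sum := by
  induction L using Multiset.induction with
  | empty => simp
  | cons T L ih => simp [Multiset.sum_cons, ih]

lemma msum_le {α : Type*} {L₁ L₂ : Multiset (Multiset α)} (h : L₁ ≤ L₂) :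
    L₁.sum ≤ L₂.sum := by
  obtain ⟨R, rfl⟩ := Multiset.le_iff_exists_add.1 h
  rw [Multiset.sum_add]
  exact Multiset.le_add_right _ _

lemma zsf_fintype {G : Type*} [AddCommGroup G] [Fintype G] (S : Multiset G)
    (h : Fintype.card G ≤ Multiset.card S) : ∃ T ≤ S, T ≠ 0 ∧ T.sum = 0 := by
  classical
  set l := S.toList with hl
  have hlen : l.length = Multiset.card S := Multiset.length_toList S
  set n := Fintype.card G with hn
  have hcard : Fintype.card G < Fintype.card (Fin (n + 1)) := by simp; omega
  obtain ⟨i, j, hne, hij⟩ := Fintype.exists_ne_map_eq_of_card_lt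
    (fun k : Fin (n + 1) => (l.take k.val).sum) hcard
  suffices key : ∀ i j : Fin (n + 1), (i : ℕ) < (j : ℕ) →
      (l.take i.val).sum = (l.take j.val).sum → ∃ T ≤ S, T ≠ 0 ∧ T.sum = 0 by
    rcases lt_or_gt_of_ne (fun hc : (i : ℕ) = (j : ℕ) => hne (Fin.ext hc)) with h' | h'
    exacts [key i j h' hij, key j i h' hij.symm]
  clear hne hij i j
  intro i j hlt hij
  have hjlen : (j : ℕ) ≤ l.length := by
    have : (j : ℕ) ≤ n := Nat.lt_succ_iff.mp j.isLt
    omega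
  set t := (l.take j.val).drop i.val with ht
  have happ : l.take i.val ++ t = l.take j.val := by
    conv_lhs => rw [show l.take i.val = (l.take j.val).take i.val by
      rw [List.take_take, min_eq_left hlt.le], ht]
    exact List.take_append_drop _ _
  have hsum : t.sum = 0 := by
    have : (l.take i.val).sum + t.sum = (l.take j.val).sum := by
      rw [← List.sum_append, happ]
    rw [← hij] at this
    exact by
      have := add_left_cancel (a := (l.take i.val).sum) (b := t.sum) (c := 0)
        (by rw [add_zero]; exact this)
      exact this
  have htlen : t.length = (j : ℕ) - (i : ℕ) := by
    rw [ht, List.length_drop, List.length_take, min_eq_left hjlen]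
  have htne : t ≠ [] := by
    intro hc
    rw [hc] at htlen
    simp only [List.length_nil] at htlen
    omega
  refine ⟨(t : Multiset G), ?_, by simpa using htne, by simpa using hsum⟩
  have hsub : t.Sublist l := ((l.take j.val).drop_sublist i.val).trans (l.take_sublist j.val)
  calc (t : Multiset G) ≤ (l : Multiset G) := Multiset.coe_le.mpr hsub.subperm
  _ = S := by rw [hl, Multiset.coe_toList]



open MvPolynomial

lemma cw_general {p : ℕ} (hp : p.Prime) {ι : Type} [Fintype ι] [DecidableEq ι]
    (k : ℕ) (c : Fin k → ι → ZMod p) (h : k * (p - 1) < Fintype.card ι) :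
    ∃ I : Finset ι, I.Nonempty ∧ ∀ j, (∑ i ∈ I, c j i) = 0 := by
  haveI : Fact p.Prime := ⟨hp⟩
  have hp1 : p - 1 ≠ 0 := by have := hp.one_lt; omega
  set f : Fin k → MvPolynomial ι (ZMod p) :=
    fun j => ∑ i : ι, MvPolynomial.C (c j i) * MvPolynomial.X i ^ (p - 1) with hf
  have hdeg : ∀ j, (f j).totalDegree ≤ p - 1 := by
    intro j
    refine (totalDegree_finset_sum _ _).trans (Finset.sup_le fun i _ => ?_)
    refine (totalDegree_mul _ _).trans ?_
    simp [totalDegree_X_pow]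
  have hsum : (∑ j : Fin k, (f j).totalDegree) < Fintype.card ι := by
    calc (∑ j : Fin k, (f j).totalDegree) ≤ ∑ _j : Fin k, (p - 1) :=
        Finset.sum_le_sum fun j _ => hdeg j
    _ = k * (p - 1) := by rw [Finset.sum_const, Finset.card_univ, Fintype.card_fin, smul_eq_mul]
    _ < Fintype.card ι := h
  have hdvd0 := char_dvd_card_solutions_of_fintype_sum_lt p hsum
  have hdvd : p ∣ Fintype.card { x : ι → ZMod p // ∀ j, eval x (f j) = 0 } := by
    convert hdvd0 using 2
  have heval : ∀ (x : ι → ZMod p) j,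
      eval x (f j) = ∑ i : ι, c j i * (x i) ^ (p - 1) := by
    intro x j
    rw [hf]
    simp
  have h0 : ∀ j, eval (0 : ι → ZMod p) (f j) = 0 := by
    intro j
    rw [heval]
    simp [zero_pow hp1]
  obtain ⟨y, hy⟩ := Fintype.exists_ne_of_one_lt_card
    (lt_of_lt_of_le hp.one_lt (Nat.le_of_dvd (Fintype.card_pos_iff.mpr ⟨⟨0, h0⟩⟩) hdvd))
    ⟨0, h0⟩
  have hxne : y.1 ≠ 0 := fun hc => hy (Subtype.ext hc)
  set x := y.1 with hx
  set I' := Finset.univ.filter (fun i => x i ≠ 0) with hI'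
  refine ⟨I', ?_, ?_⟩
  · rw [hI', Finset.filter_nonempty_iff]
    by_contra hc
    push_neg at hc
    exact hxne (funext fun i => hc i (Finset.mem_univ i))
  · intro j
    have hyj : ∑ i : ι, c j i * (x i) ^ (p - 1) = 0 := by
      rw [← heval x j]
      exact y.2 j
    calc ∑ i ∈ I', c j i = ∑ i ∈ I', c j i * (x i) ^ (p - 1) := by
          refine Finset.sum_congr rfl fun i hi => ?_
          have hxi : x i ≠ 0 := (Finset.mem_filter.mp hi).2
          rw [ZMod.pow_card_sub_one_eq_one hxi, mul_one]
    _ = ∑ i : ι, c j i * (x i) ^ (p - 1) := by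
          refine Finset.sum_subset (Finset.filter_subset _ _) fun i _ hi => ?_
          have hxi : x i = 0 := by
            by_contra hcc
            exact hi (Finset.mem_filter.mpr ⟨Finset.mem_univ i, hcc⟩)
          rw [hxi, zero_pow hp1, mul_zero]
    _ = 0 := hyj

/-- index-extraction: from a finset of positions of the list, a zero-sum submultiset. -/
lemma extract {p : ℕ} (S : Multiset (ZMod p × ZMod p)) (l : List (ZMod p × ZMod p))
    (hl : (l : Multiset (ZMod p × ZMod p)) = S) (I : Finset (Fin l.length)) :
    ∃ T : Multiset (ZMod p × ZMod p), T ≤ S ∧ Multiset.card T = I.card ∧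
      T = I.val.map l.get := by
  refine ⟨I.val.map l.get, ?_, by simp, rfl⟩
  have h1 : I.val ≤ (Finset.univ : Finset (Fin l.length)).val := by
    rw [Multiset.le_iff_subset I.nodup]
    intro a _
    exact Finset.mem_univ a
  have h2 : (Finset.univ : Finset (Fin l.length)).val.map l.get
      = (l : Multiset (ZMod p × ZMod p)) := by
    rw [Fin.univ_def]
    show ((List.finRange l.length : List (Fin l.length)) : Multiset _).map l.get = _
    rw [Multiset.map_coe, List.map_get_finRange]
  calc I.val.map l.get ≤ (Finset.univ : Finset (Fin l.length)).val.map l.get :=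
        Multiset.map_le_map h1
  _ = S := by rw [h2, hl]

lemma Dp_lemma {p : ℕ} (hp : p.Prime) (S : Multiset (ZMod p × ZMod p))
    (h : 2 * p - 1 ≤ Multiset.card S) : ∃ T ≤ S, T ≠ 0 ∧ T.sum = 0 := by
  classical
  set l := S.toList with hl
  have hlS : (l : Multiset (ZMod p × ZMod p)) = S := Multiset.coe_toList S
  have hlen : l.length = Multiset.card S := Multiset.length_toList S
  have hcard : 2 * (p - 1) < Fintype.card (Fin l.length) := by
    rw [Fintype.card_fin]
    have := hp.two_le
    omega
  obtain ⟨I, hIne, hIsum⟩ := cw_general hp 2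
    (fun j => if j = 0 then (fun i : Fin l.length => (l.get i).1)
      else (fun i => (l.get i).2)) hcard
  obtain ⟨T, hTS, hTcard, hTeq⟩ := extract S l hlS I
  refine ⟨T, hTS, ?_, ?_⟩
  · intro hc
    rw [hc] at hTcard
    simp only [Multiset.card_zero] at hTcard
    exact Finset.Nonempty.ne_empty hIne (Finset.card_eq_zero.mp hTcard.symm)
  · have hsum : T.sum = ∑ i ∈ I, l.get i := by
      rw [hTeq]; rfl
    have h1 := hIsum 0
    have h2 := hIsum 1
    simp only [if_pos rfl] at h1
    norm_num at h2
    rw [hsum]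
    ext1
    · rw [Prod.fst_sum]; exact h1
    · rw [Prod.snd_sum]; exact h2

lemma eta_lemma {p : ℕ} (hp : p.Prime) (S : Multiset (ZMod p × ZMod p))
    (h : 3 * p - 2 ≤ Multiset.card S) :
    ∃ T ≤ S, T ≠ 0 ∧ T.sum = 0 ∧ Multiset.card T ≤ p := by
  classical
  -- shrink S to exactly 3p-2 elements
  obtain ⟨S', hS'S, hS'card⟩ : ∃ S' ≤ S, Multiset.card S' = 3 * p - 2 := by
    refine ⟨(S.toList.take (3 * p - 2) : Multiset _), ?_, ?_⟩
    · calc ((S.toList.take (3 * p - 2) : List _) : Multiset _)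
          ≤ (S.toList : Multiset _) :=
            Multiset.coe_le.mpr (S.toList.take_sublist _).subperm
      _ = S := Multiset.coe_toList S
    · show (S.toList.take (3 * p - 2)).length = 3 * p - 2
      rw [List.length_take, Multiset.length_toList, min_eq_left h]
  suffices hs : ∃ T ≤ S', T ≠ 0 ∧ T.sum = 0 ∧ Multiset.card T ≤ p by
    obtain ⟨T, hT, h1, h2, h3⟩ := hs
    exact ⟨T, hT.trans hS'S, h1, h2, h3⟩
  set l := S'.toList with hl
  have hlS : (l : Multiset (ZMod p × ZMod p)) = S' := Multiset.coe_toList S'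
  have hlen : l.length = 3 * p - 2 := by rw [Multiset.length_toList, hS'card]
  have hcard : 3 * (p - 1) < Fintype.card (Fin l.length) := by
    rw [Fintype.card_fin, hlen]
    have := hp.two_le
    omega
  obtain ⟨I, hIne, hIsum⟩ := cw_general hp 3
    (fun j => if j = 0 then (fun i : Fin l.length => (l.get i).1)
      else if j = 1 then (fun i => (l.get i).2) else (fun _ => 1)) hcard
  obtain ⟨T₀, hTS, hTcard, hTeq⟩ := extract S' l hlS I
  have hsum0 : T₀.sum = 0 := by
    have hsum : T₀.sum = ∑ i ∈ I, l.get i := by rw [hTeq]; rfl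
    have h1 := hIsum 0
    have h2 := hIsum 1
    norm_num at h1 h2
    rw [hsum]
    ext1
    · rw [Prod.fst_sum]; exact h1
    · rw [Prod.snd_sum]; exact h2
  have hdvd : p ∣ Multiset.card T₀ := by
    have h3 : ((I.card : ℕ) : ZMod p) = 0 := by
      have := hIsum 2
      norm_num at this
      simpa [Finset.sum_const, nsmul_eq_mul] using this
    rw [hTcard]
    exact (ZMod.natCast_eq_zero_iff _ _).mp h3
  have hIpos : 0 < I.card := Finset.card_pos.mpr hIne
  have hTle : Multiset.card T₀ ≤ 3 * p - 2 := by
    rw [← hS'card]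
    exact Multiset.card_le_card hTS
  have hp2 := hp.two_le
  -- card T₀ = p or 2p
  have hcases : Multiset.card T₀ = p ∨ Multiset.card T₀ = 2 * p := by
    obtain ⟨q, hq⟩ := hdvd
    have hq1 : 1 ≤ q := by
      rcases Nat.eq_zero_or_pos q with h0 | h0
      · rw [h0, mul_zero] at hq; omega
      · exact h0
    have hq2 : q ≤ 2 := by
      by_contra hq3
      have h5 : p * 3 ≤ p * q := Nat.mul_le_mul_left _ (by omega)
      have h6 : 3 * p - 2 < p * q := lt_of_lt_of_le (by omega) h5
      rw [hq] at hTle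
      exact absurd hTle (not_le.mpr h6)
    interval_cases q <;> omega
  rcases hcases with hc | hc
  · exact ⟨T₀, hTS, by
      intro h0; rw [h0] at hc; simp at hc; omega, hsum0, le_of_eq hc⟩
  · -- card T₀ = 2p : split using Dp on 2p-1 of its elements
    obtain ⟨a, ha⟩ : ∃ a, a ∈ T₀ := Multiset.exists_mem_of_ne_zero (by
      intro h0; rw [h0] at hc; simp at hc; omega)
    set R := T₀.erase a with hR
    have hRcard : Multiset.card R = 2 * p - 1 := by
      rw [hR, Multiset.card_erase_of_mem ha, hc, Nat.pred_eq_sub_one]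
    obtain ⟨T₁, hT₁R, hT₁ne, hT₁sum⟩ := Dp_lemma hp R (le_of_eq hRcard.symm)
    have hT₁T₀ : T₁ ≤ T₀ := hT₁R.trans (Multiset.erase_le a T₀)
    rcases le_or_gt (Multiset.card T₁) p with hle | hgt
    · exact ⟨T₁, hT₁T₀.trans hTS, hT₁ne, hT₁sum, hle⟩
    · refine ⟨T₀ - T₁, (Multiset.sub_le_self _ _).trans hTS, ?_, ?_, ?_⟩
      · have : Multiset.card (T₀ - T₁) = 2 * p - Multiset.card T₁ := by
          rw [Multiset.card_sub hT₁T₀, hc]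
        intro h0
        rw [h0] at this
        simp at this
        have hT₁le : Multiset.card T₁ ≤ 2 * p - 1 := by
          rw [← hRcard]; exact Multiset.card_le_card hT₁R
        omega
      · have : T₁ + (T₀ - T₁) = T₀ := add_tsub_cancel_of_le hT₁T₀
        have hs : T₁.sum + (T₀ - T₁).sum = T₀.sum := by
          rw [← Multiset.sum_add, this]
        rw [hsum0, hT₁sum, zero_add] at hs
        exact hs
      · have : Multiset.card (T₀ - T₁) = 2 * p - Multiset.card T₁ := by
          rw [Multiset.card_sub hT₁T₀, hc]
        omega


lemma Dk_lemma {p : ℕ} (hp : p.Prime) : ∀ k, 1 ≤ k → ∀ S : Multiset (ZMod p × ZMod p),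
    k * p + p - 1 ≤ Multiset.card S →
    ∃ L : Multiset (Multiset (ZMod p × ZMod p)), Multiset.card L = k ∧
      (∀ T ∈ L, T ≠ 0 ∧ T.sum = 0) ∧ L.sum ≤ S := by
  intro k
  induction k with
  | zero => omega
  | succ k ih =>
    intro _ S hS
    have hp2 := hp.two_le
    rcases Nat.eq_zero_or_pos k with rfl | hk
    · have h2p : 2 * p - 1 ≤ Multiset.card S := by
        have h1 : 1 * p + p - 1 = 2 * p - 1 := by ring_nf
        omega
      obtain ⟨T, hTS, hTne, hTsum⟩ := Dp_lemma hp S h2p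
      refine ⟨{T}, by simp, ?_, by simpa using hTS⟩
      intro T' hT'
      rw [Multiset.mem_singleton] at hT'
      subst hT'
      exact ⟨hTne, hTsum⟩
    · have hkp : p ≤ k * p := Nat.le_mul_of_pos_left p hk
      have hexp : (k + 1) * p = k * p + p := by ring
      have h3p : 3 * p - 2 ≤ Multiset.card S := by omega
      obtain ⟨T, hTS, hTne, hTsum, hTcard⟩ := eta_lemma hp S h3p
      have hS' : k * p + p - 1 ≤ Multiset.card (S - T) := by
        rw [Multiset.card_sub hTS]
        omega
      obtain ⟨L, hL1, hL2, hL3⟩ := ih hk (S - T) hS'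
      refine ⟨T ::ₘ L, by simp [hL1], ?_, ?_⟩
      · intro T' hT'
        rcases Multiset.mem_cons.mp hT' with rfl | hmem
        · exact ⟨hTne, hTsum⟩
        · exact hL2 T' hmem
      · rw [Multiset.sum_cons]
        calc T + L.sum ≤ T + (S - T) := add_le_add_right hL3 T
        _ = S := add_tsub_cancel_of_le hTS

lemma lift_kernel {p m' m : ℕ} (hp : 2 ≤ p) (hm' : 1 ≤ m') (hm : m = p * m') :
    ∃ χ : ZMod m' →+ ZMod m, ∀ x : ZMod m, ((x.val : ℕ) : ZMod p) = 0 → ∃ u, χ u = x := by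
  subst hm
  haveI : NeZero (p * m') := ⟨Nat.mul_ne_zero (by omega) (by omega)⟩
  set f : ℤ →+ ZMod (p * m') := zmultiplesHom (ZMod (p * m')) ((p : ℕ) : ZMod (p * m'))
    with hfdef
  have hf : f (m' : ℤ) = 0 := by
    show (m' : ℤ) • ((p : ℕ) : ZMod (p * m')) = 0
    rw [natCast_zsmul, nsmul_eq_mul, ← Nat.cast_mul, mul_comm m' p, ZMod.natCast_self]
  refine ⟨ZMod.lift m' ⟨f, hf⟩, ?_⟩
  intro x hx
  have hdvd : p ∣ x.val := (ZMod.natCast_eq_zero_iff _ _).mp hx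
  obtain ⟨c, hc⟩ := hdvd
  refine ⟨((c : ℕ) : ZMod m'), ?_⟩
  have hcast : ((c : ℕ) : ZMod m') = ((c : ℤ) : ZMod m') := by push_cast; rfl
  rw [hcast, ZMod.lift_coe]
  show (c : ℤ) • ((p : ℕ) : ZMod (p * m')) = x
  rw [natCast_zsmul, nsmul_eq_mul, ← Nat.cast_mul, mul_comm c p, ← hc]
  exact ZMod.natCast_rightInverse x

lemma main : ∀ m : ℕ, ∀ n : ℕ, 1 ≤ m → 1 ≤ n → m ∣ n →
    ∀ S : Multiset (ZMod m × ZMod n), m + n - 1 ≤ Multiset.card S →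
    ∃ T ≤ S, T ≠ 0 ∧ T.sum = 0 := by
  intro m
  induction m using Nat.strong_induction_on with
  | _ m IH =>
  intro n hm hn hdvd S hS
  classical
  haveI : NeZero m := ⟨by omega⟩
  haveI : NeZero n := ⟨by omega⟩
  rcases eq_or_lt_of_le hm with hm1 | hm2
  · -- m = 1 : cyclic case
    have hcard : Fintype.card (ZMod m × ZMod n) ≤ Multiset.card S := by
      rw [Fintype.card_prod, ZMod.card, ZMod.card]
      have hmn : m * n = n := by rw [← hm1, one_mul]
      omega
    exact zsf_fintype S hcard
  · set p := m.minFac with hpdef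
    have hp : p.Prime := Nat.minFac_prime (by omega)
    have hp2 : 2  ≤ p := hp.two_le
    have hpm : p ∣ m := Nat.minFac_dvd m
    obtain ⟨m', hm'⟩ := hpm
    have hpm : p ∣ m := ⟨m', hm'⟩
    have hpn : p ∣ n := hpm.trans hdvd
    obtain ⟨n', hn'⟩ := hpn
    have hpn : p ∣ n := ⟨n', hn'⟩
    have hm'pos : 1 ≤ m' := by
      rcases Nat.eq_zero_or_pos m' with h0 | h0
      · rw [h0, mul_zero] at hm'; omega
      · exact h0
    have hn'pos : 1 ≤ n' := by
      rcases Nat.eq_zero_or_pos n' with h0 | h0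
      · rw [h0, mul_zero] at hn'; omega
      · exact h0
    have hm'n' : m' ∣ n' := by
      obtain ⟨q, hq⟩ := hdvd
      refine ⟨q, ?_⟩
      have hpq : p * n' = p * (m' * q) := by
        rw [← hn', hq, hm']; ring
      exact Nat.eq_of_mul_eq_mul_left (by omega) hpq
    have hm'lt : m' < m := by
      have h2m : 2 * m' ≤ m := by
        rw [hm']; exact Nat.mul_le_mul_right m' hp2
      omega
    -- the reduction hom
    set φ : ZMod m × ZMod n →+ ZMod p × ZMod p :=
      AddMonoidHom.prodMap (ZMod.castHom hpm (ZMod p)).toAddMonoidHom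
        (ZMod.castHom hpn (ZMod p)).toAddMonoidHom with hφdef
    set t := m' + n' - 1 with htdef
    have ht1 : 1 ≤ t := by omega
    have h3 : t * p + p = m + n := by
      calc t * p + p = (t + 1) * p := by ring
      _ = (m' + n') * p := by rw [show t + 1 = m' + n' from by omega]
      _ = m + n := by rw [add_mul, hm', hn', mul_comm m' p, mul_comm n' p]
    have h4 : t * p + p - 1 ≤ Multiset.card (S.map φ) := by
      rw [Multiset.card_map]
      calc t * p + p - 1 = m + n - 1 := by rw [h3]
      _ ≤ Multiset.card S := hS
    obtain ⟨L, hLcard, hLprop, hLsum⟩ := Dk_lemma hp t ht1 (S.map φ) h4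
    obtain ⟨L', hL'map, hL'sum⟩ := exists_family (⇑φ) L S hLsum
    have hmem : ∀ W ∈ L', W ≠ 0 ∧ φ W.sum = 0 := by
      intro W hW
      have hWmap : Multiset.map (⇑φ) W ∈ L := by
        rw [← hL'map]
        exact Multiset.mem_map_of_mem _ hW
      obtain ⟨h1, h2⟩ := hLprop _ hWmap
      refine ⟨fun hc => h1 (by rw [hc]; simp), ?_⟩
      rw [map_multiset_sum]
      exact h2
    set M := L'.map Multiset.sum with hMdef
    have hMcard : Multiset.card M = t := by
      rw [hMdef, Multiset.card_map]
      have := hLcard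
      rw [← hL'map, Multiset.card_map] at this
      exact this
    obtain ⟨χm, hχm⟩ := lift_kernel hp2 hm'pos hm'
    obtain ⟨χn, hχn⟩ := lift_kernel hp2 hn'pos hn'
    set χ : ZMod m' × ZMod n' →+ ZMod m × ZMod n := AddMonoidHom.prodMap χm χn with hχdef
    have hMlift : ∀ x ∈ M, ∃ u, χ u = x := by
      intro x hx
      obtain ⟨W, hW, hWx⟩ := Multiset.mem_map.mp hx
      have hφx : φ x = 0 := by rw [← hWx]; exact (hmem W hW).2
      have hx1 : ((x.1.val : ℕ) : ZMod p) = 0 := by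
        have h1 : (ZMod.castHom hpm (ZMod p)) x.1 = 0 := congrArg Prod.fst hφx
        rwa [ZMod.castHom_apply, ← ZMod.natCast_val] at h1
      have hx2 : ((x.2.val : ℕ) : ZMod p) = 0 := by
        have h1 : (ZMod.castHom hpn (ZMod p)) x.2 = 0 := congrArg Prod.snd hφx
        rwa [ZMod.castHom_apply, ← ZMod.natCast_val] at h1
      obtain ⟨u₁, hu₁⟩ := hχm x.1 hx1
      obtain ⟨u₂, hu₂⟩ := hχn x.2 hx2
      exact ⟨(u₁, u₂), Prod.ext hu₁ hu₂⟩
    obtain ⟨M', hM'⟩ := exists_map_eq (⇑χ) M hMlift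
    have hM'card : m' + n' - 1 ≤ Multiset.card M' := by
      rw [← hM'] at hMcard
      rw [Multiset.card_map] at hMcard
      omega
    obtain ⟨U, hUM', hUne, hUsum⟩ := IH m' hm'lt n' hm'pos hn'pos hm'n' M' hM'card
    set V := U.map (⇑χ) with hVdef
    have hVle : V ≤ L'.map Multiset.sum := by
      rw [hVdef, ← hMdef, ← hM']
      exact Multiset.map_le_map hUM'
    have hVsum : V.sum = 0 := by
      rw [hVdef, ← map_multiset_sum, hUsum, map_zero]
    have hVne : V ≠ 0 := by
      rw [hVdef, Ne, Multiset.map_eq_zero]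
      exact hUne
    obtain ⟨L'', hL''le, hL''map⟩ := exists_le_of_le_map Multiset.sum V L' hVle
    refine ⟨L''.sum, (msum_le hL''le).trans hL'sum, ?_, ?_⟩
    · -- nonempty
      have hL''ne : L'' ≠ 0 := by
        intro hc
        rw [hc] at hL''map
        simp at hL''map
        exact hVne hL''map.symm
      obtain ⟨W, hW⟩ := Multiset.exists_mem_of_ne_zero hL''ne
      have hWne : W ≠ 0 := (hmem W (Multiset.mem_of_le hL''le hW)).1
      have hWle : W ≤ L''.sum := by
        have : L'' = W ::ₘ L''.erase W := (Multiset.cons_erase hW).symm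
        rw [this, Multiset.sum_cons]
        exact Multiset.le_add_right _ _
      intro hc
      rw [hc] at hWle
      exact hWne (Multiset.le_zero.mp hWle)
    · rw [msum_sum, hL''map, hVsum]



end Dav

theorem stmt_2 (n₁ n₂ : ℕ) (h₁ : 1 ≤ n₁) (h₂ : 1 ≤ n₂) (hd : n₁ ∣ n₂) :
    Davenport (ZMod n₁ × ZMod n₂) = n₁ + n₂ - 1 := by
  classical
  haveI : NeZero n₁ := ⟨by omega⟩
  haveI : NeZero n₂ := ⟨by omega⟩
  have hmem : (n₁ + n₂ - 1) ∈
      {t | ∀ S : Multiset (ZMod n₁ × ZMod n₂), t ≤ Multiset.card S →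
        ∃ T ≤ S, T ≠ 0 ∧ T.sum = 0} :=
    fun S hS => Dav.main n₁ n₂ h₁ h₂ hd S hS
  refine le_antisymm (Nat.sInf_le hmem) (le_csInf ⟨_, hmem⟩ ?_)
  intro t ht
  by_contra hlt
  push_neg at hlt
  by_cases h2 : n₂ = 1
  · have hn₁ : n₁ = 1 := Nat.dvd_one.mp (h2 ▸ hd)
    have ht0 : t = 0 := by omega
    obtain ⟨T, hT, hTne, _⟩ := ht (0 : Multiset _) (by simp [ht0])
    exact hTne (Multiset.le_zero.mp hT)
  · set u : ZMod n₁ × ZMod n₂ := (1, 0) with hu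
    set v : ZMod n₁ × ZMod n₂ := (0, 1) with hv
    haveI : Fact (1 < n₂) := ⟨by omega⟩
    have huv : u ≠ v := by
      intro hc
      have h01 : (0 : ZMod n₂) = 1 := congrArg Prod.snd hc
      exact zero_ne_one h01
    set S₀ : Multiset (ZMod n₁ × ZMod n₂) :=
      Multiset.replicate (n₁ - 1) u + Multiset.replicate (n₂ - 1) v with hS₀
    have hcard : Multiset.card S₀ = n₁ + n₂ - 2 := by
      rw [hS₀, Multiset.card_add, Multiset.card_replicate, Multiset.card_replicate]
      omega
    obtain ⟨T, hT, hTne, hTsum⟩ := ht S₀ (by omega)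
    have hTmem : ∀ z ∈ T, z = u ∨ z = v := by
      intro z hz
      have hzS := Multiset.mem_of_le hT hz
      rw [hS₀, Multiset.mem_add] at hzS
      rcases hzS with h | h
      · exact Or.inl (Multiset.eq_of_mem_replicate h)
      · exact Or.inr (Multiset.eq_of_mem_replicate h)
    set a := T.count u with hadef
    set b := T.count v with hbdef
    have hTeq : T = Multiset.replicate a u + Multiset.replicate b v := by
      ext z
      rw [Multiset.count_add, Multiset.count_replicate, Multiset.count_replicate]
      by_cases hz1 : z = u
      · subst hz1
        rw [if_pos rfl, if_neg (show v ≠ u from fun hc => huv hc.symm), add_zero]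
      · by_cases hz2 : z = v
        · subst hz2
          rw [if_neg (show u ≠ v from huv), if_pos rfl, zero_add]
        · rw [if_neg (show u ≠ z from fun hc => hz1 hc.symm),
            if_neg (show v ≠ z from fun hc => hz2 hc.symm), add_zero]
          exact Multiset.count_eq_zero.mpr (fun hc => by
            rcases hTmem z hc with h | h
            exacts [hz1 h, hz2 h])
    have ha : a ≤ n₁ - 1 := by
      have h5 := Multiset.count_le_of_le u hT
      rw [hS₀, Multiset.count_add, Multiset.count_replicate, Multiset.count_replicate,
        if_pos rfl, if_neg (show v ≠ u from fun hc => huv hc.symm), add_zero] at h5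
      exact (hadef ▸ h5)
    have hb : b ≤ n₂ - 1 := by
      have h5 := Multiset.count_le_of_le v hT
      rw [hS₀, Multiset.count_add, Multiset.count_replicate, Multiset.count_replicate,
        if_neg (show u ≠ v from huv), if_pos rfl, zero_add] at h5
      exact (hbdef ▸ h5)
    have hfst : T.sum.1 = ((a : ℕ) : ZMod n₁) := by
      rw [Multiset.fst_sum, hTeq]
      simp [hu, hv, Multiset.map_replicate, Multiset.sum_replicate, nsmul_eq_mul]
    have hsnd : T.sum.2 = ((b : ℕ) : ZMod n₂) := by
      rw [Multiset.snd_sum, hTeq]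
      simp [hu, hv, Multiset.map_replicate, Multiset.sum_replicate, nsmul_eq_mul]
    have ha0 : a = 0 := by
      have h6 : ((a : ℕ) : ZMod n₁) = 0 := by rw [← hfst, hTsum]; rfl
      have h7 : n₁ ∣ a := (ZMod.natCast_eq_zero_iff _ _).mp h6
      rcases Nat.eq_zero_or_pos a with h8 | h8
      · exact h8
      · have := Nat.le_of_dvd h8 h7
        omega
    have hb0 : b = 0 := by
      have h6 : ((b : ℕ) : ZMod n₂) = 0 := by rw [← hsnd, hTsum]; rfl
      have h7 : n₂ ∣ b := (ZMod.natCast_eq_zero_iff _ _).mp h6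
      rcases Nat.eq_zero_or_pos b with h8 | h8
      · exact h8
      · have := Nat.le_of_dvd h8 h7
        omega
    rw [ha0, hb0] at hTeq
    simp at hTeq
    exact hTne hTeq
end

section
/- For natural numbers 1 ≤ n₁ | n₂, η(C_{n₁} ⊕ C_{n₂}) = 2n₁ + n₂ − 2. -/
/-!
Lift sequences over `C_{n₁} ⊕ C_{n₂}` to `ℤ × ℤ`, where a zero-sum becomes a sum divisible by
`(n₁, n₂)`. For a prime `p`, Chevalley–Warning applied to `3p - 2` elements (with the extra
coordinate `1`) yields a nonempty subfamily whose sum and size are divisible by `p`; it has `p`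
elements, or `2p`, and then either a zero-sum subfamily of `2p - 1` of them (Chevalley–Warning
again) or its complement is short. Such bounds multiply: greedily extracting disjoint short blocks
with sums divisible by `d`, and applying the second bound to the block sums divided by `d`, gives
`η(C_n ⊕ C_n) ≤ 3n - 2` and `D(C_m) ≤ m`, and combining these for `m = n₂ / n₁` gives
`η(C_{n₁} ⊕ C_{n₂}) ≤ 2n₁ + n₂ - 2`. The sequence `(1,0)^{n₁-1} (0,1)^{n₂-1} (1,1)^{n₁-1}` shows
that this is sharp.
-/

open Finset

section

variable {R : Type*} [CommSemiring R]

/-- In `R = ℤ × ℤ` with `d = (n₁, n₂)` this says that every sequence of length `≥ c` over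
`ZMod n₁ × ZMod n₂` has a nonempty zero-sum subsequence of length `≤ w`. Sequences are families
indexed by finsets, so that disjoint blocks of a family can in turn be indexed. -/
def HasShortDvdSubsum (d : R) (c w : ℕ) : Prop :=
  ∀ (ι : Type) (a : ι → R) (s : Finset ι), c ≤ #s →
    ∃ t ⊆ s, t.Nonempty ∧ #t ≤ w ∧ d ∣ ∑ i ∈ t, a i

namespace HasShortDvdSubsum

variable {d e : R} {c c' w w' : ℕ}

theorem mono (h : HasShortDvdSubsum d c w) (hc : c ≤ c') (hw : w ≤ w') :
    HasShortDvdSubsum d c' w' := fun ι a s hs ↦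
  let ⟨t, hts, ht, htw, hdvd⟩ := h ι a s (hc.trans hs)
  ⟨t, hts, ht, htw.trans hw, hdvd⟩

theorem one : HasShortDvdSubsum (1 : R) 1 1 := fun _ _ s hs ↦
  let ⟨i, hi⟩ := card_pos.1 hs
  ⟨{i}, singleton_subset_iff.2 hi, singleton_nonempty i, by simp, one_dvd _⟩

theorem one_prod {R' : Type*} [CommSemiring R'] {e : R'} (h : HasShortDvdSubsum e c w) :
    HasShortDvdSubsum ((1, e) : R × R') c w := fun ι a s hs ↦
  let ⟨t, hts, ht, htw, hdvd⟩ := h ι (fun i ↦ (a i).2) s hs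
  ⟨t, hts, ht, htw, prod_dvd_iff.2 ⟨one_dvd _, by rwa [Prod.snd_sum]⟩⟩

theorem exists_pairwiseDisjoint_subsets (h : HasShortDvdSubsum d c w) {ι : Type} (a : ι → R)
    (s : Finset ι) (k : ℕ) (hs : c + (k - 1) * w ≤ #s) :
    ∃ 𝒜 : Finset (Finset ι), #𝒜 = k ∧ (𝒜 : Set (Finset ι)).PairwiseDisjoint id ∧
      ∀ t ∈ 𝒜, t ⊆ s ∧ t.Nonempty ∧ #t ≤ w ∧ d ∣ ∑ i ∈ t, a i := by
  classical
  induction k with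
  | zero => exact ⟨∅, by simp⟩
  | succ k ih =>
    obtain ⟨𝒜, h𝒜card, h𝒜disj, h𝒜⟩ := ih (le_trans (by gcongr; omega) hs)
    have hrest : c ≤ #(s \ 𝒜.biUnion id) := calc
      c ≤ #s - k * w := by simp only [add_tsub_cancel_right] at hs; omega
      _ ≤ #s - ∑ t ∈ 𝒜, #t := by
        gcongr; simpa [h𝒜card] using sum_le_card_nsmul 𝒜 card w fun t ht ↦ (h𝒜 t ht).2.2.1
      _ ≤ #s - #(𝒜.biUnion id) := by gcongr; exact card_biUnion_le
      _ ≤ #(s \ 𝒜.biUnion id) := le_card_sdiff ..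
    obtain ⟨t₀, ht₀s, ht₀, ht₀w, ht₀d⟩ := h ι a _ hrest
    have hdisj : ∀ t ∈ 𝒜, Disjoint t₀ t := fun t ht ↦
      sdiff_disjoint.mono ht₀s (subset_biUnion_of_mem id ht)
    have ht₀𝒜 : t₀ ∉ 𝒜 := fun ht ↦ ht₀.ne_empty (disjoint_self.1 (hdisj t₀ ht))
    refine ⟨insert t₀ 𝒜, by rw [card_insert_of_notMem ht₀𝒜, h𝒜card], ?_, ?_⟩
    · rw [coe_insert]
      exact h𝒜disj.insert fun t ht _ ↦ hdisj t ht
    · simp only [mem_insert, forall_eq_or_imp]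
      exact ⟨⟨ht₀s.trans sdiff_subset, ht₀, ht₀w, ht₀d⟩, h𝒜⟩

theorem mul (h : HasShortDvdSubsum d c w) (h' : HasShortDvdSubsum e c' w') :
    HasShortDvdSubsum (d * e) (c + (c' - 1) * w) (w * w') := by
  classical
  intro ι a s hs
  obtain ⟨𝒜, h𝒜card, h𝒜disj, h𝒜⟩ := h.exists_pairwiseDisjoint_subsets a s c' hs
  choose! q hq using fun t ht ↦ (h𝒜 t ht).2.2.2
  obtain ⟨ℬ, hℬ𝒜, ⟨t, ht⟩, hℬcard, hℬdvd⟩ := h' _ q 𝒜 h𝒜card.ge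
  refine ⟨ℬ.biUnion id, biUnion_subset.2 fun t ht ↦ (h𝒜 t (hℬ𝒜 ht)).1,
    (h𝒜 t (hℬ𝒜 ht)).2.1.mono (subset_biUnion_of_mem id ht), ?_, ?_⟩
  · calc #(ℬ.biUnion id) ≤ ∑ t ∈ ℬ, #t := card_biUnion_le
      _ ≤ #ℬ • w := sum_le_card_nsmul _ _ _ fun t ht ↦ (h𝒜 t (hℬ𝒜 ht)).2.2.1
      _ ≤ w * w' := by rw [smul_eq_mul, mul_comm]; gcongr
  · simp only [sum_biUnion (h𝒜disj.subset hℬ𝒜), id]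
    rw [sum_congr rfl fun t ht ↦ hq t (hℬ𝒜 ht), ← mul_sum]
    exact mul_dvd_mul_left d hℬdvd

theorem of_card_eq (h : ∀ (ι : Type) (a : ι → R) (s : Finset ι), #s = c →
      ∃ t ⊆ s, t.Nonempty ∧ d ∣ ∑ i ∈ t, a i) :
    HasShortDvdSubsum d c c := fun ι a _ hs ↦
  let ⟨s', hs's, hs'⟩ := exists_subset_card_eq hs
  let ⟨t, hts', ht, hdvd⟩ := h ι a s' hs'
  ⟨t, hts'.trans hs's, ht, hs' ▸ card_le_card hts', hdvd⟩

end HasShortDvdSubsum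

end

open MvPolynomial in
theorem ZMod.exists_nonempty_sum_eq_zero {p : ℕ} [Fact p.Prime] {ι σ : Type*} [Fintype σ]
    (a : ι → σ → ZMod p) {s : Finset ι} (hs : Fintype.card σ * (p - 1) < #s) :
    ∃ t ⊆ s, t.Nonempty ∧ ∑ i ∈ t, a i = 0 := by
  classical
  let f : σ → MvPolynomial s (ZMod p) := fun j ↦ ∑ i : s, a i j • X i ^ (p - 1)
  have hdeg : ∑ j, (f j).totalDegree < Fintype.card s := calc
    _ ≤ ∑ _j : σ, (p - 1) := sum_le_sum fun j _ ↦ totalDegree_finsetSum_le fun i _ ↦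
      (totalDegree_smul_le ..).trans (totalDegree_X_pow ..).le
    _ < Fintype.card s := by simpa [mul_comm] using hs
  let zero_sol : {x : s → ZMod p // ∀ j, eval x (f j) = 0} :=
    ⟨0, fun j ↦ by simp [f, (Fact.out : p.Prime).one_lt, tsub_eq_zero_iff_le]⟩
  have hN := char_dvd_card_solutions_of_fintype_sum_lt p hdeg
  obtain ⟨x, hx⟩ := Fintype.exists_ne_of_one_lt_card ((Fact.out : p.Prime).one_lt.trans_le <|
    Nat.le_of_dvd (Fintype.card_pos_iff.2 ⟨zero_sol⟩) hN) zero_sol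
  -- By Fermat, `X i ^ (p - 1)` evaluates to the indicator of `x i ≠ 0`: the support of a nonzero
  -- common root is the required subfamily.
  refine ⟨({i | x.1 i ≠ 0} : Finset s).map (Function.Embedding.subtype _), ?_, ?_, ?_⟩
  · simp +contextual [subset_iff]
  · rw [← Subtype.coe_ne_coe, Function.ne_iff] at hx
    obtain ⟨i, hi⟩ := hx
    exact ⟨i, mem_map_of_mem _ (by simpa [zero_sol] using hi)⟩
  · funext j
    simpa [f, ZMod.pow_card_sub_one, Finset.sum_filter] using x.2 j

theorem Int.exists_nonempty_forall_dvd_sum {p : ℕ} (hp : p.Prime) {ι σ : Type*} [Fintype σ]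
    (a : ι → σ → ℤ) {s : Finset ι} (hs : Fintype.card σ * (p - 1) < #s) :
    ∃ t ⊆ s, t.Nonempty ∧ ∀ j, (p : ℤ) ∣ ∑ i ∈ t, a i j := by
  have := Fact.mk hp
  obtain ⟨t, hts, ht, hsum⟩ := ZMod.exists_nonempty_sum_eq_zero (fun i j ↦ (a i j : ZMod p)) hs
  refine ⟨t, hts, ht, fun j ↦ ?_⟩
  simpa [← ZMod.intCast_zmod_eq_zero_iff_dvd] using congr_fun hsum j

theorem Int.hasShortDvdSubsum_prime {p : ℕ} (hp : p.Prime) : HasShortDvdSubsum (p : ℤ) p p :=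
  .of_card_eq fun _ a s hs ↦
    let ⟨t, hts, ht, hdvd⟩ := Int.exists_nonempty_forall_dvd_sum hp (fun i (_ : Unit) ↦ a i)
      (s := s) (by simpa [hs] using hp.pos)
    ⟨t, hts, ht, hdvd ()⟩

theorem Int.hasShortDvdSubsum_self {n : ℕ} (hn : n ≠ 0) : HasShortDvdSubsum (n : ℤ) n n := by
  induction n using Nat.prime_composite_induction with
  | zero => exact absurd rfl hn
  | one => simpa only [Nat.cast_one] using HasShortDvdSubsum.one
  | prime p hp => exact Int.hasShortDvdSubsum_prime hp
  | composite a ha iha b hb ihb =>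
    rw [Nat.cast_mul]
    refine ((iha (by omega)).mul (ihb (by omega))).mono ?_ le_rfl
    rw [Nat.sub_one_mul, mul_comm]
    have := Nat.le_mul_of_pos_right a (by omega : 0 < b)
    omega

theorem Prod.natCast_dvd_iff {R R' : Type*} [Semiring R] [Semiring R'] {n : ℕ} {x : R × R'} :
    (n : R × R') ∣ x ↔ (n : R) ∣ x.1 ∧ (n : R') ∣ x.2 := by
  rw [prod_dvd_iff, Prod.fst_natCast, Prod.snd_natCast]

theorem hasShortDvdSubsum_prime_two_mul_sub_one {p : ℕ} (hp : p.Prime) :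
    HasShortDvdSubsum (p : ℤ × ℤ) (2 * p - 1) (2 * p - 1) :=
  .of_card_eq fun _ a s hs ↦ by
    obtain ⟨t, hts, ht, hdvd⟩ := Int.exists_nonempty_forall_dvd_sum hp
      (fun i ↦ ![(a i).1, (a i).2]) (s := s) (by simp [hs]; have := hp.two_le; omega)
    exact ⟨t, hts, ht, Prod.natCast_dvd_iff.2 (by simpa [Prod.fst_sum, Prod.snd_sum] using
      (⟨hdvd 0, hdvd 1⟩ : _ ∧ _))⟩

theorem exists_nonempty_dvd_card_dvd_sum {p : ℕ} (hp : p.Prime) {ι : Type*} (a : ι → ℤ × ℤ)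
    {s : Finset ι} (hs : 3 * (p - 1) < #s) :
    ∃ t ⊆ s, t.Nonempty ∧ p ∣ #t ∧ (p : ℤ × ℤ) ∣ ∑ i ∈ t, a i := by
  obtain ⟨t, hts, ht, hdvd⟩ := Int.exists_nonempty_forall_dvd_sum hp
    (fun i ↦ ![(a i).1, (a i).2, 1]) (s := s) (by simpa using hs)
  exact ⟨t, hts, ht, Int.natCast_dvd_natCast.1 (by simpa using hdvd 2),
    Prod.natCast_dvd_iff.2 (by simpa [Prod.fst_sum, Prod.snd_sum] using
      (⟨hdvd 0, hdvd 1⟩ : _ ∧ _))⟩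

theorem exists_card_le_dvd_sum_of_card_eq_two_mul {p : ℕ} (hp : p.Prime) {ι : Type}
    (a : ι → ℤ × ℤ) {t : Finset ι} (ht : #t = 2 * p) (hdvd : (p : ℤ × ℤ) ∣ ∑ i ∈ t, a i) :
    ∃ u ⊆ t, u.Nonempty ∧ #u ≤ p ∧ (p : ℤ × ℤ) ∣ ∑ i ∈ u, a i := by
  classical
  obtain ⟨x, hx⟩ : t.Nonempty := card_pos.1 (by have := hp.pos; omega)
  obtain ⟨r, hr, hrne, hrcard, hrdvd⟩ := hasShortDvdSubsum_prime_two_mul_sub_one hp _ a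
    (t.erase x) (by rw [card_erase_of_mem hx, ht])
  have hrt : r ⊆ t := hr.trans (erase_subset x t)
  by_cases hrp : #r ≤ p
  · exact ⟨r, hrt, hrne, hrp, hrdvd⟩
  refine ⟨t \ r, sdiff_subset, ⟨x, mem_sdiff.2 ⟨hx, fun h ↦ notMem_erase x t (hr h)⟩⟩, ?_, ?_⟩
  · rw [card_sdiff_of_subset hrt]
    omega
  · rw [← sum_sdiff hrt] at hdvd
    exact (dvd_add_left hrdvd).1 hdvd

theorem hasShortDvdSubsum_prime_three_mul_sub_two {p : ℕ} (hp : p.Prime) :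
    HasShortDvdSubsum (p : ℤ × ℤ) (3 * p - 2) p := by
  intro ι a s hs
  have := hp.two_le
  obtain ⟨s', hs's, hs'⟩ := exists_subset_card_eq hs
  obtain ⟨t, hts', ht, ⟨k, hk⟩, hdvd⟩ :=
    exists_nonempty_dvd_card_dvd_sum hp a (s := s') (by omega)
  have hk3 : p * k < p * 3 := hk ▸ (card_le_card hts').trans_lt (by omega)
  obtain rfl | rfl : k = 1 ∨ k = 2 := by
    have : k ≠ 0 := by rintro rfl; simp [ht.ne_empty] at hk
    have := Nat.lt_of_mul_lt_mul_left hk3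
    omega
  · exact ⟨t, hts'.trans hs's, ht, by rw [hk, mul_one], hdvd⟩
  · obtain ⟨u, hut, hu, hup, hudvd⟩ :=
      exists_card_le_dvd_sum_of_card_eq_two_mul hp a (by rw [hk, mul_comm]) hdvd
    exact ⟨u, hut.trans (hts'.trans hs's), hu, hup, hudvd⟩

theorem hasShortDvdSubsum_three_mul_sub_two {n : ℕ} (hn : n ≠ 0) :
    HasShortDvdSubsum (n : ℤ × ℤ) (3 * n - 2) n := by
  induction n using Nat.prime_composite_induction with
  | zero => exact absurd rfl hn
  | one => simpa only [Nat.cast_one] using HasShortDvdSubsum.one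
  | prime p hp => exact hasShortDvdSubsum_prime_three_mul_sub_two hp
  | composite a ha iha b hb ihb =>
    rw [Nat.cast_mul]
    refine ((iha (by omega)).mul (ihb (by omega))).mono ?_ le_rfl
    have : a ≤ a * b := Nat.le_mul_of_pos_right a (by omega)
    rw [show 3 * b - 2 - 1 = 3 * (b - 1) by omega, mul_assoc, Nat.sub_one_mul, mul_comm b]
    omega

theorem hasShortDvdSubsum_of_dvd {n₁ n₂ : ℕ} (h₂ : n₂ ≠ 0) (hd : n₁ ∣ n₂) :
    HasShortDvdSubsum ((n₁ : ℤ), (n₂ : ℤ)) (2 * n₁ + n₂ - 2) n₂ := by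
  obtain ⟨m, rfl⟩ := hd
  have h₁ : n₁ ≠ 0 := left_ne_zero_of_mul h₂
  have hm : m ≠ 0 := right_ne_zero_of_mul h₂
  have h := (hasShortDvdSubsum_three_mul_sub_two h₁).mul
    ((Int.hasShortDvdSubsum_self hm).one_prod (R := ℤ))
  rw [show (n₁ : ℤ × ℤ) * (1, (m : ℤ)) = ((n₁ : ℤ), ((n₁ * m : ℕ) : ℤ)) by ext <;> simp] at h
  refine h.mono ?_ le_rfl
  rw [Nat.sub_one_mul, mul_comm m]
  have : n₁ ≤ n₁ * m := Nat.le_mul_of_pos_right n₁ (Nat.pos_of_ne_zero hm)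
  omega

theorem ZMod.exists_le_sum_eq_zero_card_le {n₁ n₂ : ℕ} (h₂ : n₂ ≠ 0) (hd : n₁ ∣ n₂)
    (S : Multiset (ZMod n₁ × ZMod n₂)) (hS : 2 * n₁ + n₂ - 2 ≤ S.card) :
    ∃ T ≤ S, T ≠ 0 ∧ T.sum = 0 ∧ T.card ≤ n₂ := by
  obtain ⟨t, hts, ht, htcard, hdvd⟩ := hasShortDvdSubsum_of_dvd h₂ hd _
    (fun x ↦ ((x.1.1.cast : ℤ), (x.1.2.cast : ℤ))) S.toEnumFinset (by simpa using hS)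
  refine ⟨t.1.map Prod.fst, Multiset.map_fst_le_of_subset_toEnumFinset hts,
    by simpa using ht.ne_empty, ?_, by simpa using htcard⟩
  rw [prod_dvd_iff] at hdvd
  simp only [Prod.fst_sum, Prod.snd_sum, ← ZMod.intCast_zmod_eq_zero_iff_dvd, Int.cast_sum,
    ZMod.intCast_cast, ZMod.cast_id', id] at hdvd
  ext <;> simp [Prod.fst_sum, Prod.snd_sum, hdvd]

theorem Multiset.exists_eq_add_of_le_add {α : Type*} [DecidableEq α] {T A B : Multiset α}
    (h : T ≤ A + B) : ∃ TA ≤ A, ∃ TB ≤ B, T = TA + TB :=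
  ⟨T ∩ A, Multiset.inter_le_right, T - A, tsub_le_iff_left.2 h, by rw [add_comm, sub_add_inter]⟩

def extremalSeq (n₁ n₂ : ℕ) : Multiset (ZMod n₁ × ZMod n₂) :=
  .replicate (n₁ - 1) (1, 0) + (.replicate (n₂ - 1) (0, 1) + .replicate (n₁ - 1) (1, 1))

theorem card_extremalSeq (n₁ n₂ : ℕ) :
    (extremalSeq n₁ n₂).card = 2 * (n₁ - 1) + (n₂ - 1) := by
  simp only [extremalSeq, Multiset.card_add, Multiset.card_replicate]
  omega

theorem not_exists_le_extremalSeq_sum_eq_zero_card_le (n₁ n₂ : ℕ) :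
    ¬∃ T ≤ extremalSeq n₁ n₂, T ≠ 0 ∧ T.sum = 0 ∧ T.card ≤ n₂ := by
  classical
  rintro ⟨T, hT, hT0, hsum, hcard⟩
  obtain ⟨TA, hTA, TBC, hTBC, rfl⟩ := Multiset.exists_eq_add_of_le_add hT
  obtain ⟨TB, hTB, TC, hTC, rfl⟩ := Multiset.exists_eq_add_of_le_add hTBC
  obtain ⟨a, ha, rfl⟩ := Multiset.le_replicate_iff.1 hTA
  obtain ⟨b, hb, rfl⟩ := Multiset.le_replicate_iff.1 hTB
  obtain ⟨c, hc, rfl⟩ := Multiset.le_replicate_iff.1 hTC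
  have hpos : a + (b + c) ≠ 0 := by simpa using mt Multiset.card_eq_zero.1 hT0
  simp only [Multiset.card_add, Multiset.card_replicate] at hcard
  have hac : n₁ ∣ a + c := (ZMod.natCast_eq_zero_iff _ _).1 <| by
    simpa [Multiset.sum_replicate] using congr_arg Prod.fst hsum
  have hbc : n₂ ∣ b + c := (ZMod.natCast_eq_zero_iff _ _).1 <| by
    simpa [Multiset.sum_replicate] using congr_arg Prod.snd hsum
  have hac' : a + c = 0 ∨ a + c = n₁ := (eq_or_ne _ _).imp_right fun h ↦
    Nat.eq_of_dvd_of_lt_two_mul h hac (by omega)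
  have hbc' : b + c = 0 ∨ b + c = n₂ := (eq_or_ne _ _).imp_right fun h ↦
    Nat.eq_of_dvd_of_lt_two_mul h hbc (by omega)
  omega

theorem stmt_4 (n₁ n₂ : ℕ) (h₁ : 1 ≤ n₁) (h₂ : 1 ≤ n₂) (hd : n₁ ∣ n₂) :
    etaC (ZMod n₁ × ZMod n₂) = 2 * n₁ + n₂ - 2 := by
  rw [etaC, AddMonoid.exponent_prod, ZMod.exponent, ZMod.exponent, lcm_eq_nat_lcm,
    Nat.lcm_eq_right hd, show 2 * n₁ + n₂ - 2 = 2 * (n₁ - 1) + (n₂ - 1) + 1 by omega,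
    Nat.sInf_upward_closed_eq_succ_iff]
  · refine ⟨fun S hS ↦ ZMod.exists_le_sum_eq_zero_card_le (by omega) hd S (by omega),
      fun h ↦ not_exists_le_extremalSeq_sum_eq_zero_card_le n₁ n₂ ?_⟩
    exact h _ (card_extremalSeq n₁ n₂).ge
  · exact fun _ _ hk h S hS ↦ h S (hk.trans hS)
end

section
/- For every finite abelian group G, s(G) ≤ |G| + exp(G) − 1. -/
/-!
Gao's argument. Translating by the most frequent term of `S`, we may assume it is `0`, occurring
`v` times. If `v ≥ exp G`, take `exp G` zeros. Otherwise the nonzero terms form a sequence of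
length at least `|G| + (exp G - v) - 1` in which every term occurs at most `v` times. By the
Kemperman–Scherk theorem, the sets of sums of subsequences of length at most `i` grow, from
`i` to `i + 1`, by at least the number of terms occurring more than `i` times, unless a short
zero-sum subsequence appears; hence every such sequence of length at least `|G|` has a non-empty
zero-sum subsequence of length at most `v`. Extracting these greedily yields a zero-sum
subsequence of length in `[exp G - v, exp G)`, which we pad with zeros to length `exp G`.
-/

open Finset Pointwise

section KempermanScherk

variable {G : Type*} [AddCommGroup G] [DecidableEq G]

theorem Finset.kemperman_scherk {A B : Finset G} (hA : 0 ∈ A) (hB : 0 ∈ B)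
    (hAB : ∀ a ∈ A, ∀ b ∈ B, a + b = 0 → a = 0) : #A + #B ≤ #(A + B) + 1 := by
  induction B using Finset.strongInduction generalizing A with
  | H B ih =>
  by_cases hstall : ∀ e ∈ A, e ≠ 0 → e +ᵥ B ⊆ A
  · have hsum : A + B = A ∪ B := by
      refine Subset.antisymm (fun x hx ↦ ?_) (union_subset ?_ ?_)
      · obtain ⟨a, ha, b, hb, rfl⟩ := mem_add.1 hx
        by_cases ha0 : a = 0
        · simp [ha0, hb]
        · exact mem_union_left _ (hstall a ha ha0 (vadd_mem_vadd_finset hb))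
      · exact fun a ha ↦ by simpa using add_mem_add ha hB
      · exact fun b hb ↦ by simpa using add_mem_add hA hb
    -- A common element `c` would make `A` invariant under translation by `c`, so `-c ∈ A`.
    have hinter : A ∩ B ⊆ {0} := by
      intro c hc
      obtain ⟨hcA, hcB⟩ := mem_inter.1 hc
      have htrans : c +ᵥ A ⊆ A := by
        intro y hy
        obtain ⟨a, ha, rfl⟩ := mem_vadd_finset.1 hy
        by_cases ha0 : a = 0
        · simpa [ha0] using hcA
        · simpa [add_comm] using hstall a ha ha0 (vadd_mem_vadd_finset hcB)
      obtain ⟨a, ha, hac⟩ := mem_vadd_finset.1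
        ((eq_of_subset_of_card_le htrans (card_vadd_finset c A).ge).symm ▸ hA)
      have ha0 : a = 0 := hAB a ha c hcB (by rw [add_comm]; exact hac)
      simpa [ha0] using hac
    calc #A + #B = #(A ∪ B) + #(A ∩ B) := (card_union_add_card_inter A B).symm
      _ ≤ #(A + B) + 1 := by
        rw [hsum]
        exact Nat.add_le_add_left ((card_le_card hinter).trans (card_singleton 0).le) _
  · push Not at hstall
    obtain ⟨e, heA, he0, hnot⟩ := hstall
    obtain ⟨_, hy, hyA⟩ := not_subset.1 hnot
    obtain ⟨b, hbB, rfl⟩ := mem_vadd_finset.1 hy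
    set x := addDysonETransform e (A, B)
    have hx₂ : x.2 ⊂ B := by
      refine ssubset_of_subset_of_ne inter_subset_left fun h ↦ hyA ?_
      obtain ⟨a, ha, hab⟩ := mem_vadd_finset.1 (mem_inter.1 (h ▸ hbB)).2
      simpa [← hab] using ha
    have h0x₁ : (0 : G) ∈ x.1 := mem_union_left _ hA
    have h0x₂ : (0 : G) ∈ x.2 := mem_inter.2 ⟨hB, mem_vadd_finset.2 ⟨e, heA, by simp⟩⟩
    have hx : ∀ a ∈ x.1, ∀ b ∈ x.2, a + b = 0 → a = 0 := by
      intro a ha b hb hab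
      obtain ⟨hbB, hb'⟩ := mem_inter.1 hb
      obtain ⟨a₀, ha₀, rfl⟩ := mem_vadd_finset.1 hb'
      rcases mem_union.1 ha with haA | haT
      · exact hAB a haA _ hbB hab
      obtain ⟨b₁, hb₁, rfl⟩ := mem_vadd_finset.1 haT
      obtain rfl : a₀ = 0 :=
        hAB a₀ ha₀ b₁ hb₁ (by rw [← hab]; simp only [vadd_eq_add]; abel)
      exact absurd (hAB e heA _ hbB (by simp)) he0
    calc #A + #B = #x.1 + #x.2 := (addDysonETransform.card e (A, B)).symm
      _ ≤ #(x.1 + x.2) + 1 := ih x.2 hx₂ h0x₁ h0x₂ hx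
      _ ≤ #(A + B) + 1 := by grw [addDysonETransform.subset e (A, B)]

end KempermanScherk

theorem Multiset.cons_le_of_card_lt_count {α : Type*} [DecidableEq α] {S T : Multiset α} {b : α}
    (hT : T ≤ S) (hb : Multiset.card T < S.count b) : b ::ₘ T ≤ S := by
  refine Multiset.le_iff_count.2 fun x ↦ ?_
  rw [Multiset.count_cons]
  split_ifs with hx
  · subst hx
    have := T.count_le_card x
    omega
  · simpa using Multiset.le_iff_count.1 hT x

section ShortZeroSums

variable {G : Type*} [AddCommGroup G] [Fintype G]

open scoped Classical in
noncomputable def subsums (S : Multiset G) (i : ℕ) : Finset G :=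
  {g | ∃ T ≤ S, Multiset.card T ≤ i ∧ T.sum = g}

theorem mem_subsums {S : Multiset G} {i : ℕ} {g : G} :
    g ∈ subsums S i ↔ ∃ T ≤ S, Multiset.card T ≤ i ∧ T.sum = g := by
  classical
  simp [subsums]

theorem zero_mem_subsums (S : Multiset G) (i : ℕ) : 0 ∈ subsums S i :=
  mem_subsums.2 ⟨0, Multiset.zero_le S, by simp, Multiset.sum_zero⟩

variable [DecidableEq G]

theorem card_subsums_add_card_le {S : Multiset G} {i : ℕ}
    (hS : ∀ T ≤ S, T ≠ 0 → Multiset.card T ≤ i + 1 → T.sum ≠ 0) :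
    #(subsums S i) + #{a ∈ S.toFinset | i < S.count a} ≤ #(subsums S (i + 1)) := by
  set A := {a ∈ S.toFinset | i < S.count a}
  have h0A : (0 : G) ∉ A := fun h ↦ hS {0}
    (Multiset.singleton_le.2 (Multiset.mem_toFinset.1 (mem_filter.1 h).1)) (by simp) (by simp)
    (by simp)
  have hcons : ∀ b ∈ A, ∀ T ≤ S, Multiset.card T ≤ i → b ::ₘ T ≤ S :=
    fun b hb T hT hTi ↦ Multiset.cons_le_of_card_lt_count hT (hTi.trans_lt (mem_filter.1 hb).2)
  have hunique : ∀ a ∈ subsums S i, ∀ b ∈ insert 0 A, a + b = 0 → a = 0 := by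
    intro a ha b hb hab
    rcases mem_insert.1 hb with rfl | hbA
    · simpa using hab
    obtain ⟨T, hTS, hTi, rfl⟩ := mem_subsums.1 ha
    refine absurd ?_ (hS (b ::ₘ T) (hcons b hbA T hTS hTi) Multiset.cons_ne_zero (by simpa))
    rw [Multiset.sum_cons, add_comm, hab]
  have hsub : subsums S i + insert 0 A ⊆ subsums S (i + 1) := by
    intro x hx
    obtain ⟨a, ha, b, hb, rfl⟩ := mem_add.1 hx
    obtain ⟨T, hTS, hTi, rfl⟩ := mem_subsums.1 ha
    rcases mem_insert.1 hb with rfl | hbA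
    · exact mem_subsums.2 ⟨T, hTS, by omega, by simp⟩
    · exact mem_subsums.2 ⟨b ::ₘ T, hcons b hbA T hTS hTi, by simpa, by simp [add_comm]⟩
  have hscherk := kemperman_scherk (zero_mem_subsums S i) (mem_insert_self 0 A) hunique
  rw [card_insert_of_notMem h0A] at hscherk
  have hmono := card_le_card hsub
  omega

theorem add_sum_min_count_le_card_subsums {S : Multiset G} {k : ℕ}
    (hS : ∀ T ≤ S, T ≠ 0 → Multiset.card T ≤ k → T.sum ≠ 0) {i : ℕ} (hi : i ≤ k) :
    1 + ∑ a ∈ S.toFinset, min (S.count a) i ≤ #(subsums S i) := by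
  induction i with
  | zero => simpa using card_pos.2 ⟨0, zero_mem_subsums S 0⟩
  | succ i ih =>
    have hstep : ∑ a ∈ S.toFinset, min (S.count a) (i + 1)
        = ∑ a ∈ S.toFinset, min (S.count a) i + #{a ∈ S.toFinset | i < S.count a} := by
      rw [card_filter, ← sum_add_distrib]
      refine sum_congr rfl fun a _ ↦ ?_
      split_ifs <;> omega
    have hgrowth := card_subsums_add_card_le (i := i) fun T hT hT0 hTi ↦ hS T hT hT0 (by omega)
    have hi' := ih (by omega)
    omega

theorem exists_zero_sum_card_le_of_count_le {S : Multiset G} {v : ℕ}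
    (hv : ∀ a, S.count a ≤ v) (hS : Fintype.card G ≤ Multiset.card S) :
    ∃ T ≤ S, T ≠ 0 ∧ Multiset.card T ≤ v ∧ T.sum = 0 := by
  by_contra! h
  have hmin : ∑ a ∈ S.toFinset, min (S.count a) v = Multiset.card S := by
    simp_rw [min_eq_left (hv _), Multiset.toFinset_sum_count_eq]
  have hlower := add_sum_min_count_le_card_subsums h le_rfl
  have hupper := card_le_univ (subsums S v)
  omega

end ShortZeroSums

section ErdosGinzburgZiv

variable {G : Type*} [AddCommGroup G] [Fintype G] [DecidableEq G]

theorem exists_zero_sum_card_mem_Ico {R : Multiset G} {v : ℕ} (hv : ∀ a, R.count a ≤ v)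
    {k : ℕ} (hk : 0 < k) (hR : Fintype.card G + k ≤ Multiset.card R + 1) :
    ∃ U ≤ R, U.sum = 0 ∧ k ≤ Multiset.card U ∧ Multiset.card U < k + v := by
  induction k using Nat.strong_induction_on generalizing R with
  | _ k ih =>
  obtain ⟨T, hTR, hT0, hTv, hTsum⟩ := exists_zero_sum_card_le_of_count_le hv (by omega)
  have hTpos : 0 < Multiset.card T := Multiset.card_pos.2 hT0
  by_cases hkT : k ≤ Multiset.card T
  · exact ⟨T, hTR, hTsum, hkT, by omega⟩
  have hv' : ∀ a, (R - T).count a ≤ v := fun a ↦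
    (Multiset.count_le_of_le a (Multiset.sub_le_self R T)).trans (hv a)
  obtain ⟨U, hUR, hUsum, hkU, hUk⟩ := ih (k - Multiset.card T) (by omega) hv' (by omega)
    (by rw [Multiset.card_sub hTR]; omega)
  refine ⟨T + U, ?_, by simp [hTsum, hUsum],
    by rw [Multiset.card_add]; omega, by rw [Multiset.card_add]; omega⟩
  calc T + U ≤ T + (R - T) := add_le_add_right hUR T
    _ = R := add_tsub_cancel_of_le hTR

theorem exists_zero_sum_card_eq_exponent_of_count_le_count_zero {S : Multiset G}
    (hmax : ∀ x, S.count x ≤ S.count 0)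
    (hS : Fintype.card G + AddMonoid.exponent G - 1 ≤ Multiset.card S) :
    ∃ T ≤ S, T.sum = 0 ∧ Multiset.card T = AddMonoid.exponent G := by
  set n := AddMonoid.exponent G
  set v := S.count 0
  have hn : 0 < n := Nat.pos_of_ne_zero AddMonoid.exponent_ne_zero_of_finite
  by_cases hnv : n ≤ v
  · exact ⟨Multiset.replicate n 0, Multiset.le_count_iff_replicate_le.1 hnv, by simp, by simp⟩
  set R := S.filter (· ≠ 0)
  have hsplit : S.filter (· = 0) + R = S := Multiset.filter_add_not _ S
  have hzeros : S.filter (· = 0) = Multiset.replicate v 0 := Multiset.filter_eq' S 0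
  have hcardR : Multiset.card R + v = Multiset.card S := by
    simpa [hzeros, add_comm] using congrArg Multiset.card hsplit
  have hRv : ∀ a, R.count a ≤ v := fun a ↦
    (Multiset.count_le_of_le a (Multiset.filter_le _ S)).trans (hmax a)
  obtain ⟨U, hUR, hUsum, hU, hUn⟩ :=
    exists_zero_sum_card_mem_Ico hRv (k := n - v) (by omega) (by omega)
  refine ⟨Multiset.replicate (n - Multiset.card U) 0 + U, ?_, by simp [hUsum],
    by rw [Multiset.card_add, Multiset.card_replicate]; omega⟩
  rw [← hsplit, hzeros]
  exact add_le_add ((Multiset.replicate_le_replicate 0).2 (by omega)) hUR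

theorem exists_zero_sum_card_eq_exponent {S : Multiset G}
    (hS : Fintype.card G + AddMonoid.exponent G - 1 ≤ Multiset.card S) :
    ∃ T ≤ S, T.sum = 0 ∧ Multiset.card T = AddMonoid.exponent G := by
  obtain ⟨c, -, hc⟩ := exists_max_image univ S.count univ_nonempty
  have hinj : Function.Injective (· - c : G → G) := sub_left_injective
  have hcount : ∀ x, (S.map (· - c)).count x = S.count (x + c) := fun x ↦ by
    simpa using Multiset.count_map_eq_count' _ S hinj (x + c)
  obtain ⟨T, hTS, hTsum, hTcard⟩ := exists_zero_sum_card_eq_exponent_of_count_le_count_zero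
    (S := S.map (· - c)) (fun x ↦ by simpa [hcount] using hc (x + c) (mem_univ _))
    (by rwa [Multiset.card_map])
  refine ⟨T.map (· + c), ?_, ?_, by simpa⟩
  · simpa [Multiset.map_map, Function.comp_def] using Multiset.map_le_map (f := (· + c)) hTS
  · rw [Multiset.sum_map_add, Multiset.map_id', hTsum, Multiset.map_const',
      Multiset.sum_replicate, hTcard]
    simp [AddMonoid.exponent_nsmul_eq_zero]

end ErdosGinzburgZiv

theorem stmt_6 (G : Type*) [AddCommGroup G] [Fintype G] :
    egz G ≤ Fintype.card G + AddMonoid.exponent G - 1 := by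
  classical
  exact Nat.sInf_le fun S hS ↦ exists_zero_sum_card_eq_exponent hS
end

section
/- Suppose that for every prime p, s(C_p³) < 20370(p−1) + 1, s(C_p²) = 4(p−1)+1, and s(C_p) = 2(p−1)+1. Then for every natural number n ≥ 2, s(C_n³) ≤ 20370(n−1) + 1. -/
/-! Reduction modulo `a` maps `(ℤ/ab)³` onto `(ℤ/a)³`, and its kernel is the image of `(ℤ/b)³`
under multiplication by `a`. From a long sequence over `(ℤ/ab)³` one repeatedly extracts blocks of
length `a` whose sums vanish modulo `a`; their sums lie in the kernel, so `c(b-1)+1` of them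
contain `b` blocks whose sums add up to zero, a zero-sum subsequence of length `ab`. Since
`(c(a-1)+1) + a·c(b-1) = c(ab-1)+1`, the bound `c(n-1)+1` passes from `a` and `b` to `ab`, hence
from the primes to every `n`. -/

theorem Multiset.exists_le_map_eq_of_le_map_s11 {α β : Type*} {f : α → β} {s : Multiset β}
    {t : Multiset α} (h : s ≤ t.map f) : ∃ u ≤ t, u.map f = s := by
  induction s using Quotient.inductionOn with | h l₁ =>
  induction t using Quotient.inductionOn with | h l₂ =>
  obtain ⟨l, hperm, hsub⟩ := h
  obtain ⟨u, hu, rfl⟩ := List.sublist_map_iff.mp hsub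
  exact ⟨u, hu.subperm, Quot.sound hperm⟩

theorem Multiset.join_le_join {α : Type*} {L L' : Multiset (Multiset α)} (h : L' ≤ L) :
    L'.join ≤ L.join := by
  obtain ⟨u, rfl⟩ := Multiset.le_iff_exists_add.mp h
  rw [Multiset.join_add]
  exact Multiset.le_add_right _ _

/-- `egz G` is the least `t` with `EGZProperty G (AddMonoid.exponent G) t`. -/
def EGZProperty (G : Type*) [AddCommGroup G] (e t : ℕ) : Prop :=
  ∀ S : Multiset G, t ≤ Multiset.card S → ∃ T ≤ S, T.sum = 0 ∧ Multiset.card T = e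

namespace EGZProperty

variable {G H K : Type*} [AddCommGroup G] [AddCommGroup H] [AddCommGroup K]

theorem mono {e t t' : ℕ} (h : EGZProperty G e t) (ht : t ≤ t') : EGZProperty G e t' :=
  fun S hS => h S (ht.trans hS)

theorem of_card_mul [Fintype G] : EGZProperty G (AddMonoid.exponent G)
    (Fintype.card G * (AddMonoid.exponent G - 1) + 1) := by
  classical
  intro S hS
  obtain ⟨g, -, hg⟩ : ∃ g ∈ Finset.univ, AddMonoid.exponent G - 1 < S.count g := by
    refine Finset.exists_lt_of_sum_lt ?_
    rw [Finset.sum_const, Finset.card_univ, smul_eq_mul,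
      Multiset.sum_count_eq_card fun a _ => Finset.mem_univ a]
    omega
  refine ⟨Multiset.replicate (AddMonoid.exponent G) g,
    Multiset.le_count_iff_replicate_le.mp (by omega), ?_, Multiset.card_replicate _ _⟩
  rw [Multiset.sum_replicate, AddMonoid.exponent_nsmul_eq_zero]

theorem egz [Finite G] : EGZProperty G (AddMonoid.exponent G) (egz G) := by
  have := Fintype.ofFinite G
  exact Nat.sInf_mem (⟨_, of_card_mul⟩ : {t | EGZProperty G (AddMonoid.exponent G) t}.Nonempty)

theorem exists_le_map_sum_eq_zero {e t : ℕ} (h : EGZProperty K e t) (f : G →+ K)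
    {S : Multiset G} (hS : t ≤ Multiset.card S) :
    ∃ T ≤ S, f T.sum = 0 ∧ Multiset.card T = e := by
  obtain ⟨T', hT'S, hsum, hcard⟩ := h (S.map f) (by rwa [Multiset.card_map])
  obtain ⟨T, hTS, rfl⟩ := Multiset.exists_le_map_eq_of_le_map_s11 hT'S
  exact ⟨T, hTS, by rwa [map_multiset_sum], by rwa [Multiset.card_map] at hcard⟩

theorem exists_disjoint_map_sum_eq_zero {e t : ℕ} (h : EGZProperty K e t) (f : G →+ K)
    (k : ℕ) {S : Multiset G} (hS : t + e * k ≤ Multiset.card S) :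
    ∃ L : Multiset (Multiset G), Multiset.card L = k + 1 ∧ L.join ≤ S ∧
      ∀ T ∈ L, f T.sum = 0 ∧ Multiset.card T = e := by
  classical
  induction k generalizing S with
  | zero =>
    obtain ⟨T, hTS, hT⟩ := h.exists_le_map_sum_eq_zero f (S := S) (by omega)
    exact ⟨{T}, rfl, by simpa using hTS, by simpa using hT⟩
  | succ k ih =>
    obtain ⟨T, hTS, hT, hTcard⟩ := h.exists_le_map_sum_eq_zero f (S := S) (by nlinarith)
    have hrest : t + e * k ≤ Multiset.card (S - T) := by
      rw [Multiset.card_sub hTS, hTcard]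
      rw [mul_add_one] at hS
      omega
    obtain ⟨L, hLcard, hLS, hL⟩ := ih hrest
    refine ⟨T ::ₘ L, by rw [Multiset.card_cons, hLcard], ?_, ?_⟩
    · rw [Multiset.join_cons]
      calc T + L.join ≤ T + (S - T) := add_le_add_right hLS T
        _ = S := add_tsub_cancel_of_le hTS
    · simpa [hT, hTcard] using hL

/-- Blocks of length `e` whose sums lie in `ker f` are grouped, `e'` at a time, into a zero-sum
subsequence of length `e * e'`. -/
theorem of_ker_le_range {e e' t k : ℕ} (i : H →+ G) (f : G →+ K) (hfi : f.ker ≤ i.range)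
    (hK : EGZProperty K e t) (hH : EGZProperty H e' (k + 1)) :
    EGZProperty G (e * e') (t + e * k) := by
  classical
  intro S hS
  obtain ⟨L, hLcard, hLS, hL⟩ := hK.exists_disjoint_map_sum_eq_zero f k hS
  have hlift : ∀ T ∈ L, i (Function.invFun i T.sum) = T.sum := fun T hT =>
    Function.invFun_eq (hfi (hL T hT).1)
  obtain ⟨W, hWL, hWsum, hWcard⟩ :=
    hH (L.map fun T => Function.invFun i T.sum) (by rw [Multiset.card_map, hLcard])
  obtain ⟨L', hL'L, rfl⟩ := Multiset.exists_le_map_eq_of_le_map_s11 hWL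
  have hL' : ∀ T ∈ L', T ∈ L := fun T hT => Multiset.mem_of_le hL'L hT
  refine ⟨L'.join, (Multiset.join_le_join hL'L).trans hLS, ?_, ?_⟩
  · have := congrArg i hWsum
    rwa [map_multiset_sum, Multiset.map_map, map_zero, Function.comp_def,
      Multiset.map_congr rfl fun T hT => hlift T (hL' T hT), ← Multiset.sum_join] at this
  · rw [Multiset.card_map] at hWcard
    rw [Multiset.card_join, Multiset.map_congr rfl fun T hT => (hL T (hL' T hT)).2,
      Multiset.map_const', Multiset.sum_replicate, hWcard, smul_eq_mul, mul_comm]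

end EGZProperty

theorem AddMonoidHom.ker_prodMap_le_range_prodMap {G G' H H' K K' : Type*} [AddGroup G]
    [AddGroup G'] [AddGroup H] [AddGroup H'] [AddGroup K] [AddGroup K'] {i : H →+ G}
    {i' : H' →+ G'} {f : G →+ K} {f' : G' →+ K'} (h : f.ker ≤ i.range)
    (h' : f'.ker ≤ i'.range) : (f.prodMap f').ker ≤ (i.prodMap i').range := by
  rw [AddMonoidHom.ker_prodMap, AddMonoidHom.range_prodMap]
  exact AddSubgroup.prod_mono h h'

/-- `x ↦ p * x`, well defined because `p * m = 0` in `ZMod (p * m)`. -/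
def ZMod.mulLeftHom (p m : ℕ) : ZMod m →+ ZMod (p * m) :=
  ZMod.lift m ⟨zmultiplesHom _ (p : ZMod (p * m)), by
    simp only [zmultiplesHom_apply, natCast_zsmul, nsmul_eq_mul]
    rw [← Nat.cast_mul, mul_comm m p, ZMod.natCast_self]⟩

theorem ZMod.ker_castHom_le_range_mulLeftHom (p m : ℕ) :
    (ZMod.castHom (dvd_mul_right p m) (ZMod p)).toAddMonoidHom.ker ≤
      (ZMod.mulLeftHom p m).range := by
  intro g hg
  obtain ⟨a, rfl⟩ : ∃ a : ℤ, (a : ZMod (p * m)) = g := ⟨_, ZMod.intCast_zmod_cast g⟩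
  have hpa : (p : ℤ) ∣ a := by
    rw [← ZMod.intCast_zmod_eq_zero_iff_dvd]
    simpa using hg
  obtain ⟨q, rfl⟩ := hpa
  exact ⟨q, by simp [ZMod.mulLeftHom, ZMod.lift_coe, mul_comm]⟩

theorem AddMonoid.exponent_zmod_prod_prod (n : ℕ) :
    AddMonoid.exponent (ZMod n × ZMod n × ZMod n) = n := by
  simp [AddMonoid.exponent_prod, ZMod.exponent]

theorem EGZProperty.zmod_prod_prod_mul {c a b : ℕ} (ha : a ≠ 0) (hb : b ≠ 0)
    (Ha : EGZProperty (ZMod a × ZMod a × ZMod a) a (c * (a - 1) + 1))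
    (Hb : EGZProperty (ZMod b × ZMod b × ZMod b) b (c * (b - 1) + 1)) :
    EGZProperty (ZMod (a * b) × ZMod (a * b) × ZMod (a * b)) (a * b)
      (c * (a * b - 1) + 1) := by
  let φ := (ZMod.castHom (dvd_mul_right a b) (ZMod a)).toAddMonoidHom
  let ι := ZMod.mulLeftHom a b
  have hker := ZMod.ker_castHom_le_range_mulLeftHom a b
  refine (EGZProperty.of_ker_le_range (ι.prodMap (ι.prodMap ι)) (φ.prodMap (φ.prodMap φ))
    (AddMonoidHom.ker_prodMap_le_range_prodMap hker
      (AddMonoidHom.ker_prodMap_le_range_prodMap hker hker)) Ha Hb).mono (le_of_eq ?_)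
  obtain ⟨a, rfl⟩ : ∃ a', a = a' + 1 := ⟨a - 1, by omega⟩
  obtain ⟨b, rfl⟩ : ∃ b', b = b' + 1 := ⟨b - 1, by omega⟩
  rw [show (a + 1) * (b + 1) = a * b + a + b + 1 by ring]
  simp only [Nat.add_sub_cancel]
  ring

theorem EGZProperty.zmod_prod_prod {c : ℕ}
    (hprime : ∀ p, p.Prime → EGZProperty (ZMod p × ZMod p × ZMod p) p (c * (p - 1) + 1)) :
    ∀ n, n ≠ 0 → EGZProperty (ZMod n × ZMod n × ZMod n) n (c * (n - 1) + 1) := by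
  intro n
  induction n using Nat.recOnMul with
  | zero => exact absurd rfl
  | one =>
    intro _ S hS
    obtain ⟨x, hx⟩ := Multiset.card_pos_iff_exists_mem (s := S) |>.mp (by simp at hS; omega)
    exact ⟨{x}, Multiset.singleton_le.mpr hx, Subsingleton.elim _ _, rfl⟩
  | prime p hp => exact fun _ => hprime p hp
  | mul a b ha hb =>
    intro hab
    exact zmod_prod_prod_mul (left_ne_zero_of_mul hab) (right_ne_zero_of_mul hab)
      (ha (left_ne_zero_of_mul hab)) (hb (right_ne_zero_of_mul hab))

theorem stmt_11_general
    (h3 : ∀ p : ℕ, p.Prime → egz (ZMod p × ZMod p × ZMod p) < 20370 * (p - 1) + 1) :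
    ∀ n : ℕ, 2 ≤ n → egz (ZMod n × ZMod n × ZMod n) ≤ 20370 * (n - 1) + 1 := by
  have hprime (p : ℕ) (hp : p.Prime) :
      EGZProperty (ZMod p × ZMod p × ZMod p) p (20370 * (p - 1) + 1) := by
    have : NeZero p := ⟨hp.ne_zero⟩
    simpa only [AddMonoid.exponent_zmod_prod_prod] using EGZProperty.egz.mono (h3 p hp).le
  intro n hn
  refine Nat.sInf_le (?_ : EGZProperty _ (AddMonoid.exponent _) _)
  rw [AddMonoid.exponent_zmod_prod_prod]
  exact EGZProperty.zmod_prod_prod hprime n (by omega)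

theorem stmt_11
    (h3 : ∀ p : ℕ, p.Prime → egz (ZMod p × ZMod p × ZMod p) < 20370 * (p - 1) + 1)
    (h2 : ∀ p : ℕ, p.Prime → egz (ZMod p × ZMod p) = 4 * (p - 1) + 1)
    (h1 : ∀ p : ℕ, p.Prime → egz (ZMod p) = 2 * (p - 1) + 1) :
    ∀ n : ℕ, 2 ≤ n → egz (ZMod n × ZMod n × ZMod n) ≤ 20370 * (n - 1) + 1 :=
  stmt_11_general h3
end

section
/- Let G = C_{n₁} ⊕ C_{n₂} ⊕ C_{n₃} with 1 < n₁ | n₂ | n₃. Suppose η(C_{n₁}³) ≤ a(n₁−1) + 1 for a constant a ≥ 3. Then D(G) ≤ (n₁−1) + (n₂−1) + (n₃−1) + 1 + (a−3)(n₁−1). -/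
/-!
Let `H = 0 ⊕ n₁C_{n₂} ⊕ n₁C_{n₃} ≅ C_{n₂/n₁} ⊕ C_{n₃/n₁}`, so that `G/H ≅ C_{n₁}³`. As long as at
least `η(G/H)` terms remain, a sequence over `G` yields a further block of at most
`exp(G/H) = n₁` terms whose image in `G/H` sums to zero; once there are `D(H)` such disjoint blocks,
a zero-sum subsequence of their sums in `H` gives a zero-sum subsequence in `G`. Hence
`D(G) ≤ D_{D(H)}(G/H) ≤ n₁ (D(H) - 1) + η(C_{n₁}³)`, and `D(H) = n₂/n₁ + n₃/n₁ - 1` is Olson's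
theorem. That theorem follows from the same argument by induction, with quotient `C_p²` for a prime
`p`, where Chevalley–Warning gives `D(C_p²) ≤ 2p - 1` and `η(C_p²) ≤ 3p - 2`.
-/
namespace Multiset

variable {α β : Type*}

theorem exists_le_card_eq {S : Multiset α} {k : ℕ} (h : k ≤ card S) :
    ∃ T ≤ S, card T = k := by
  obtain ⟨T, hT⟩ := exists_mem_of_ne_zero <| card_pos.1 <| by
    rw [card_powersetCard]; exact Nat.choose_pos h
  exact ⟨T, mem_powersetCard.1 hT⟩

theorem exists_map_eq_of_forall_mem_range {f : α → β} {Y : Multiset β}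
    (h : ∀ y ∈ Y, ∃ x, f x = y) : ∃ X : Multiset α, X.map f = Y := by
  refine ⟨Y.pmap (fun _ hy => hy.choose) h, ?_⟩
  rw [map_pmap]
  exact ((pmap_congr Y fun y hy _ _ => (h y hy).choose_spec).trans (pmap_eq_map _ id Y h)).trans
    (map_id Y)

theorem le_map_iff {f : α → β} {T : Multiset β} {S : Multiset α} :
    T ≤ S.map f ↔ ∃ B ≤ S, B.map f = T := by
  refine ⟨fun h => ?_, fun ⟨B, hB, hBT⟩ => hBT ▸ map_le_map hB⟩
  induction T using Multiset.induction generalizing S with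
  | empty => exact ⟨0, zero_le _, rfl⟩
  | cons b T ih =>
    obtain ⟨a, haS, rfl⟩ := mem_map.1 (mem_of_le h (mem_cons_self _ _))
    obtain ⟨S', rfl⟩ := exists_cons_of_mem haS
    rw [map_cons, cons_le_cons_iff] at h
    obtain ⟨B, hB, rfl⟩ := ih h
    exact ⟨a ::ₘ B, cons_le_cons _ hB, map_cons _ _ _⟩

theorem sum_le_sum_of_le {L L' : Multiset (Multiset α)} (h : L ≤ L') : L.sum ≤ L'.sum := by
  obtain ⟨U, rfl⟩ := le_iff_exists_add.1 h
  simp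

end Multiset

open Multiset

section ZeroSum

variable {G H Q K : Type*} [AddCommGroup G] [AddCommGroup H] [AddCommGroup Q] [AddCommGroup K]

/- `IsDavenportBound G t`, `IsShortZeroSumBound G (exponent G) t` and `IsDavenportMBound G k t`
say that `t` lies in the set whose infimum is `Davenport G`, `etaC G` and `DavenportM G k`. -/
def IsDavenportBound (G : Type*) [AddCommGroup G] (t : ℕ) : Prop :=
  ∀ S : Multiset G, t ≤ card S → ∃ T ≤ S, T ≠ 0 ∧ T.sum = 0

def IsShortZeroSumBound (G : Type*) [AddCommGroup G] (e t : ℕ) : Prop :=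
  ∀ S : Multiset G, t ≤ card S → ∃ T ≤ S, T ≠ 0 ∧ T.sum = 0 ∧ card T ≤ e

def IsDavenportMBound (G : Type*) [AddCommGroup G] (k t : ℕ) : Prop :=
  ∀ S : Multiset G, t ≤ card S → ∃ L : Multiset (Multiset G), card L = k ∧
    (∀ T ∈ L, T ≠ 0 ∧ T.sum = 0) ∧ L.sum ≤ S

theorem IsDavenportBound.davenport_le {t : ℕ} (h : IsDavenportBound G t) : Davenport G ≤ t :=
  Nat.sInf_le h

theorem IsDavenportBound.mono {t t' : ℕ} (h : IsDavenportBound G t) (htt' : t ≤ t') :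
    IsDavenportBound G t' :=
  fun S hS => h S (htt'.trans hS)

theorem IsDavenportBound.of_injective {t : ℕ} (f : G →+ H) (hf : Function.Injective f)
    (h : IsDavenportBound H t) : IsDavenportBound G t := by
  intro S hS
  obtain ⟨T', hT'S, hT'0, hT'sum⟩ := h (S.map f) (by rwa [card_map])
  obtain ⟨T, hTS, rfl⟩ := le_map_iff.1 hT'S
  refine ⟨T, hTS, fun hT => hT'0 (by rw [hT, Multiset.map_zero]), hf ?_⟩
  rw [map_multiset_sum, hT'sum, _root_.map_zero]

theorem IsDavenportBound.isShortZeroSumBound {d : ℕ} (h : IsDavenportBound G d) :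
    IsShortZeroSumBound G d d := by
  intro S hS
  obtain ⟨S', hS'S, hS'⟩ := exists_le_card_eq hS
  obtain ⟨T, hTS', hT0, hTsum⟩ := h S' hS'.ge
  exact ⟨T, hTS'.trans hS'S, hT0, hTsum, hS' ▸ card_le_card hTS'⟩

theorem IsShortZeroSumBound.isDavenportBound {e t : ℕ} (h : IsShortZeroSumBound G e t) :
    IsDavenportBound G t := fun S hS =>
  let ⟨T, hTS, hT0, hTsum, _⟩ := h S hS
  ⟨T, hTS, hT0, hTsum⟩

theorem isDavenportBound_card [Fintype G] : IsDavenportBound G (Fintype.card G) := by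
  intro S hS
  set l := S.toList
  obtain ⟨i, j, hij, hsum⟩ := Fintype.exists_ne_map_eq_of_card_lt
    (fun i : Fin (Fintype.card G + 1) => (l.take i).sum) (by simp)
  wlog hlt : i < j generalizing i j
  · exact this j i hij.symm hsum.symm (lt_of_le_of_ne (not_lt.1 hlt) hij.symm)
  have hj : (j : ℕ) ≤ l.length := by simpa [l] using (Nat.lt_succ_iff.1 j.2).trans hS
  refine ⟨((l.take j).drop i : List G), ?_, ?_, ?_⟩
  · have := (((l.take j).drop_sublist i).trans (l.take_sublist j)).subperm
    rwa [← coe_le, coe_toList] at this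
  · simp only [ne_eq, coe_eq_zero, List.drop_eq_nil_iff, List.length_take]
    omega
  · have hsplit := List.sum_take_add_sum_drop (l.take j) i
    rw [List.take_take, min_eq_left (Fin.le_iff_val_le_val.1 hlt.le)] at hsplit
    rw [sum_coe]
    simpa [hsum] using hsplit

theorem isShortZeroSumBound_card_mul_exponent [Fintype G] :
    IsShortZeroSumBound G (AddMonoid.exponent G) (Fintype.card G * AddMonoid.exponent G) := by
  classical
  intro S hS
  obtain ⟨g, -, hg⟩ : ∃ g ∈ (Finset.univ : Finset G), AddMonoid.exponent G ≤ S.count g := by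
    refine Finset.exists_le_of_sum_le Finset.univ_nonempty ?_
    rwa [sum_count_eq_card fun _ _ => Finset.mem_univ _, Finset.sum_const, Finset.card_univ,
      smul_eq_mul]
  have hge : addOrderOf g ≤ AddMonoid.exponent G :=
    Nat.le_of_dvd (Nat.pos_of_ne_zero AddMonoid.exponent_ne_zero_of_finite)
      (AddMonoid.addOrder_dvd_exponent g)
  refine ⟨replicate (addOrderOf g) g, le_count_iff_replicate_le.1 (hge.trans hg), ?_, ?_, ?_⟩
  · exact fun h => (addOrderOf_pos g).ne' (by simpa using congrArg card h)
  · rw [sum_replicate, addOrderOf_nsmul_eq_zero]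
  · rwa [card_replicate]

theorem isShortZeroSumBound_etaC [Fintype G] :
    IsShortZeroSumBound G (AddMonoid.exponent G) (etaC G) :=
  Nat.sInf_mem (s := {t | IsShortZeroSumBound G (AddMonoid.exponent G) t})
    ⟨_, isShortZeroSumBound_card_mul_exponent⟩

theorem davenport_eq_zero_of_not_isOfFinAddOrder {g : G} (hg : ¬IsOfFinAddOrder g) :
    Davenport G = 0 := by
  refine Nat.sInf_eq_zero.2 (Or.inr (Set.eq_empty_of_forall_notMem fun t ht => ?_))
  obtain ⟨T, hT, hT0, hTsum⟩ := ht (replicate t g) (card_replicate t g).ge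
  obtain ⟨k, -, rfl⟩ := le_replicate_iff.1 hT
  rw [sum_replicate] at hTsum
  have hk : k ≠ 0 := by rintro rfl; exact hT0 rfl
  exact hg (isOfFinAddOrder_iff_nsmul_eq_zero.2 ⟨k, Nat.pos_of_ne_zero hk, hTsum⟩)

theorem IsDavenportBound.isDavenportMBound_one {t : ℕ} (h : IsDavenportBound G t) :
    IsDavenportMBound G 1 t := by
  intro S hS
  obtain ⟨T, hTS, hT0, hTsum⟩ := h S hS
  exact ⟨{T}, card_singleton T, by simpa using ⟨hT0, hTsum⟩, by rwa [sum_singleton]⟩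

theorem IsDavenportMBound.mono {k t t' : ℕ} (h : IsDavenportMBound G k t) (htt' : t ≤ t') :
    IsDavenportMBound G k t' :=
  fun S hS => h S (htt'.trans hS)

theorem IsDavenportMBound.succ {k s e t : ℕ} (hk : IsDavenportMBound G k s)
    (he : IsShortZeroSumBound G e t) (hts : t ≤ s + e) : IsDavenportMBound G (k + 1) (s + e) := by
  classical
  intro S hS
  obtain ⟨T, hTS, hT0, hTsum, hTe⟩ := he S (hts.trans hS)
  obtain ⟨L, hL, hLT, hLS⟩ := hk (S - T) (by rw [card_sub hTS]; omega)
  refine ⟨T ::ₘ L, by rw [card_cons, hL], ?_, ?_⟩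
  · simpa [forall_mem_cons] using ⟨⟨hT0, hTsum⟩, hLT⟩
  · rw [sum_cons]
    calc T + L.sum ≤ T + (S - T) := add_le_add_right hLS T
      _ = S := add_tsub_cancel_of_le hTS

theorem IsDavenportMBound.add_mul {k s e t : ℕ} (hk : IsDavenportMBound G k s)
    (he : IsShortZeroSumBound G e t) (hts : t ≤ s + e) (j : ℕ) :
    IsDavenportMBound G (k + j) (s + e * j) := by
  induction j with
  | zero => simpa using hk
  | succ j ih =>
    rw [← add_assoc, mul_add_one, ← add_assoc]
    exact ih.succ he (hts.trans (by gcongr; exact Nat.le_add_right _ _))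

theorem isDavenportMBound_etaC [Fintype G] (k : ℕ) :
    IsDavenportMBound G (k + 1) (etaC G + AddMonoid.exponent G * k) :=
  add_comm 1 k ▸ (isShortZeroSumBound_etaC (G := G)).isDavenportBound.isDavenportMBound_one.add_mul
    isShortZeroSumBound_etaC (Nat.le_add_right _ _) k

theorem IsDavenportMBound.exists_blocks {k t : ℕ} (h : IsDavenportMBound Q k t) (φ : G →+ Q)
    {S : Multiset G} (hS : t ≤ card S) :
    ∃ L : Multiset (Multiset G), card L = k ∧ (∀ B ∈ L, B ≠ 0 ∧ φ B.sum = 0) ∧ L.sum ≤ S := by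
  obtain ⟨L₀, hL₀, hL₀T, hL₀S⟩ := h (S.map φ) (by rwa [card_map])
  obtain ⟨L, rfl, hLS⟩ := exists_map_map_eq_of_sum_le_map hL₀S
  refine ⟨L, by rwa [card_map] at hL₀, fun B hB => ?_, hLS⟩
  obtain ⟨hB0, hBsum⟩ := hL₀T (B.map φ) (mem_map_of_mem _ hB)
  exact ⟨fun h => hB0 (by rw [h, Multiset.map_zero]), by rwa [map_multiset_sum]⟩

theorem IsDavenportBound.of_isDavenportMBound {d t : ℕ} (φ : G →+ Q) (ψ : K →+ G)
    (hker : φ.ker ≤ ψ.range) (hK : IsDavenportBound K d) (hQ : IsDavenportMBound Q d t) :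
    IsDavenportBound G t := by
  intro S hS
  obtain ⟨L, hL, hLker, hLS⟩ := hQ.exists_blocks φ hS
  obtain ⟨Y, hY⟩ := exists_map_eq_of_forall_mem_range (f := ψ) (Y := L.map sum) fun y hy => by
    obtain ⟨B, hB, rfl⟩ := mem_map.1 hy
    exact hker (hLker B hB).2
  obtain ⟨Z, hZY, hZ0, hZsum⟩ := hK Y (by rw [← card_map ψ, hY, card_map, hL])
  obtain ⟨L', hL'L, hL'⟩ := le_map_iff.1 (hY ▸ map_le_map hZY : Z.map ψ ≤ L.map sum)
  refine ⟨L'.sum, (sum_le_sum_of_le hL'L).trans hLS, ?_, ?_⟩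
  · have hL'0 : L' ≠ 0 := by
      rintro rfl
      exact hZ0 (map_eq_zero.1 (by rw [← hL', Multiset.map_zero]))
    obtain ⟨B, hB⟩ := exists_mem_of_ne_zero hL'0
    rw [Ne, sum_eq_zero_iff]
    exact fun h => (hLker B (mem_of_le hL'L hB)).1 (h B hB)
  · change L'.join.sum = 0
    rw [sum_join, hL', ← map_multiset_sum, hZsum, _root_.map_zero]

theorem exists_zeroSum_two_mul_card_le {T : Multiset G} (hD : IsDavenportBound G (card T - 1))
    (hT0 : T ≠ 0) (hT : T.sum = 0) : ∃ U ≤ T, U ≠ 0 ∧ U.sum = 0 ∧ 2 * card U ≤ card T := by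
  classical
  obtain ⟨U, hUT, hU0, hUsum, hUcard⟩ := hD.isShortZeroSumBound T (Nat.sub_le _ _)
  by_cases h : 2 * card U ≤ card T
  · exact ⟨U, hUT, hU0, hUsum, h⟩
  have hT_pos := card_pos.2 hT0
  refine ⟨T - U, tsub_le_self, ?_, ?_, ?_⟩
  · rw [Ne, ← card_eq_zero, card_sub hUT]
    omega
  · have hsplit := congrArg sum (add_tsub_cancel_of_le hUT)
    rwa [sum_add, hUsum, zero_add, hT] at hsplit
  · rw [card_sub hUT]
    omega

end ZeroSum

open MvPolynomial in
theorem isDavenportBound_pi_zmod (σ : Type*) [Fintype σ] (p : ℕ) [hp : Fact p.Prime] :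
    IsDavenportBound (σ → ZMod p) ((p - 1) * Fintype.card σ + 1) := by
  classical
  intro S hS
  -- `X ^ (p - 1)` is the indicator of `X ≠ 0`, so the support of a nonzero common root of the
  -- `f j` is a nonempty zero-sum subsequence; Chevalley–Warning provides such a root.
  let f : σ → MvPolynomial S (ZMod p) := fun j => ∑ x : S, C ((x : σ → ZMod p) j) * X x ^ (p - 1)
  have hdeg : ∑ j, (f j).totalDegree < Fintype.card S := by
    calc ∑ j, (f j).totalDegree ≤ ∑ _j : σ, (p - 1) :=
          Finset.sum_le_sum fun j _ => totalDegree_finsetSum_le fun x _ =>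
            (totalDegree_mul _ _).trans (by simp)
      _ < Fintype.card S := by
          rw [Finset.sum_const, Finset.card_univ, smul_eq_mul, Multiset.card_coe]
          linarith
  let zero : {x : S → ZMod p // ∀ j, eval x (f j) = 0} :=
    ⟨0, fun j => by simp [f, hp.out.one_lt, tsub_eq_zero_iff_le]⟩
  have hcount := char_dvd_card_solutions_of_fintype_sum_lt p hdeg
  obtain ⟨x, hx⟩ := Fintype.exists_ne_of_one_lt_card
    (hp.out.one_lt.trans_le (Nat.le_of_dvd (Fintype.card_pos_iff.2 ⟨zero⟩) hcount)) zero
  let t : Finset S := {i | x.1 i ≠ 0}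
  have ht : t.Nonempty := by
    obtain ⟨i, hi⟩ := Function.ne_iff.1 (Subtype.coe_ne_coe.2 hx)
    exact ⟨i, Finset.mem_filter.2 ⟨Finset.mem_univ _, hi⟩⟩
  refine ⟨t.val.map (↑), ?_, fun h => ht.ne_empty (Finset.val_eq_zero.1 (map_eq_zero.1 h)), ?_⟩
  · calc t.val.map (↑) ≤ (Finset.univ : Finset S).val.map (↑) :=
          map_le_map (Finset.val_le_iff.2 (Finset.subset_univ _))
      _ = S := map_univ_coe S
  · change ∑ i ∈ t, (i : σ → ZMod p) = 0
    funext j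
    simpa [f, t, Finset.sum_apply, ZMod.pow_card_sub_one, Finset.sum_filter] using x.2 j

section PrimeSquare

variable (p : ℕ) [hp : Fact p.Prime]

theorem isDavenportBound_zmod_prod_zmod : IsDavenportBound (ZMod p × ZMod p) (2 * p - 1) :=
  ((isDavenportBound_pi_zmod (Fin 2) p).mono (by have := hp.out.two_le; simp; omega)).of_injective
    (LinearEquiv.finTwoArrow (ZMod p) (ZMod p)).symm.toLinearMap.toAddMonoidHom
    (LinearEquiv.injective _)

theorem exists_zeroSum_dvd_card {S : Multiset (ZMod p × ZMod p)} (hS : 3 * p - 2 ≤ card S) :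
    ∃ T ≤ S, T ≠ 0 ∧ T.sum = 0 ∧ p ∣ card T := by
  -- the extra coordinate `1` adds up to the length of the subsequence
  obtain ⟨T', hT'S, hT'0, hT'sum⟩ := isDavenportBound_pi_zmod (Fin 3) p
    (S.map fun x => ![1, x.1, x.2]) (by have := hp.out.two_le; simp; omega)
  obtain ⟨T, hTS, rfl⟩ := le_map_iff.1 hT'S
  have hsum (i : Fin 3) : (T.map fun x => (![1, x.1, x.2] : Fin 3 → ZMod p) i).sum = 0 := by
    have := congrFun hT'sum i
    rwa [Pi.multiset_sum_apply, Multiset.map_map] at this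
  refine ⟨T, hTS, fun h => hT'0 (by rw [h, Multiset.map_zero]), Prod.ext ?_ ?_, ?_⟩
  · simpa [fst_sum] using hsum 1
  · simpa [snd_sum] using hsum 2
  · simpa [ZMod.natCast_eq_zero_iff] using hsum 0

theorem isShortZeroSumBound_zmod_prod_zmod :
    IsShortZeroSumBound (ZMod p × ZMod p) p (3 * p - 2) := by
  intro S hS
  obtain ⟨S', hS'S, hS'⟩ := exists_le_card_eq hS
  obtain ⟨T, hTS', hT0, hTsum, c, hc⟩ := exists_zeroSum_dvd_card p hS'.ge
  have hcard : p * c ≤ 3 * p - 2 := hc ▸ hS' ▸ card_le_card hTS'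
  have hc3 : c < 3 := by
    by_contra! h
    have := Nat.mul_le_mul_left p h
    have := hp.out.two_le
    omega
  have hc0 : c ≠ 0 := by
    rintro rfl
    exact hT0 (card_eq_zero.1 hc)
  obtain rfl | rfl : c = 1 ∨ c = 2 := by omega
  · exact ⟨T, hTS'.trans hS'S, hT0, hTsum, by omega⟩
  · have hD : IsDavenportBound (ZMod p × ZMod p) (card T - 1) := by
      rw [hc, mul_comm]
      exact isDavenportBound_zmod_prod_zmod p
    obtain ⟨U, hUT, hU0, hUsum, hU⟩ := exists_zeroSum_two_mul_card_le hD hT0 hTsum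
    exact ⟨U, (hUT.trans hTS').trans hS'S, hU0, hUsum, by omega⟩

theorem isDavenportMBound_zmod_prod_zmod (k : ℕ) :
    IsDavenportMBound (ZMod p × ZMod p) (k + 1) (2 * p - 1 + p * k) :=
  add_comm 1 k ▸ (isDavenportBound_zmod_prod_zmod p).isDavenportMBound_one.add_mul
    (isShortZeroSumBound_zmod_prod_zmod p) (by omega) k

end PrimeSquare

namespace ZMod

def scaleHom (p k : ℕ) : ZMod k →+ ZMod (p * k) :=
  ZMod.lift k ⟨(AddMonoidHom.mulLeft (p : ZMod (p * k))).comp (Int.castAddHom _), by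
    change (p : ZMod (p * k)) * ((k : ℤ) : ZMod (p * k)) = 0
    rw [Int.cast_natCast, ← Nat.cast_mul, ZMod.natCast_self]⟩

theorem scaleHom_intCast (p k : ℕ) (c : ℤ) : scaleHom p k c = p * c :=
  ZMod.lift_coe _ _ c

theorem ker_castHom_le_range_scaleHom (p k : ℕ) :
    (ZMod.castHom (dvd_mul_right p k) (ZMod p)).toAddMonoidHom.ker ≤ (scaleHom p k).range := by
  intro u hu
  obtain ⟨c, hc⟩ := (ZMod.intCast_zmod_eq_zero_iff_dvd _ p).1
    ((ZMod.intCast_cast u).trans hu)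
  refine ⟨c, ?_⟩
  rw [scaleHom_intCast, ← ZMod.intCast_zmod_cast u, hc]
  push_cast
  rfl

end ZMod

theorem IsDavenportBound.zmod_mul_prod_zmod_mul (p : ℕ) [Fact p.Prime] {k₁ k₂ : ℕ}
    (hk₁ : 0 < k₁) (hk₂ : 0 < k₂) (h : IsDavenportBound (ZMod k₁ × ZMod k₂) (k₁ + k₂ - 1)) :
    IsDavenportBound (ZMod (p * k₁) × ZMod (p * k₂)) (p * k₁ + p * k₂ - 1) := by
  obtain ⟨j, hj⟩ : ∃ j, k₁ + k₂ - 1 = j + 1 := ⟨k₁ + k₂ - 2, by omega⟩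
  have hlen : 2 * p - 1 + p * j = p * k₁ + p * k₂ - 1 := by
    have : p * k₁ + p * k₂ = p * j + 2 * p := by rw [← mul_add, show k₁ + k₂ = j + 2 by omega]; ring
    have := (Fact.out : p.Prime).two_le
    omega
  have hker : (AddMonoidHom.prodMap (ZMod.castHom (dvd_mul_right p k₁) (ZMod p)).toAddMonoidHom
      (ZMod.castHom (dvd_mul_right p k₂) (ZMod p)).toAddMonoidHom).ker ≤
      ((ZMod.scaleHom p k₁).prodMap (ZMod.scaleHom p k₂)).range := by
    rw [AddMonoidHom.ker_prodMap, AddMonoidHom.range_prodMap]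
    exact AddSubgroup.prod_mono (ZMod.ker_castHom_le_range_scaleHom p k₁)
      (ZMod.ker_castHom_le_range_scaleHom p k₂)
  exact h.of_isDavenportMBound _ _ hker (hj ▸ hlen ▸ isDavenportMBound_zmod_prod_zmod p j)

theorem isDavenportBound_zmod_prod_zmod_of_dvd {m n : ℕ} [NeZero n] (h : m ∣ n) :
    IsDavenportBound (ZMod m × ZMod n) (m + n - 1) := by
  induction m using Nat.strong_induction_on generalizing n with
  | _ m ih =>
  rcases eq_or_ne m 1 with rfl | hm1
  · simpa [ZMod.card] using isDavenportBound_card (G := ZMod 1 × ZMod n)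
  obtain ⟨p, hp, k₁, rfl⟩ := Nat.exists_prime_and_dvd hm1
  obtain ⟨k₂, rfl⟩ := (dvd_mul_right p k₁).trans h
  have : Fact p.Prime := ⟨hp⟩
  have : NeZero k₂ := ⟨right_ne_zero_of_mul (NeZero.ne (p * k₂))⟩
  have hk : k₁ ∣ k₂ := Nat.dvd_of_mul_dvd_mul_left hp.pos h
  have hk₁ : 0 < k₁ := Nat.pos_of_dvd_of_pos hk (Nat.pos_of_ne_zero (NeZero.ne k₂))
  exact (ih k₁ (lt_mul_left hk₁ hp.one_lt) hk).zmod_mul_prod_zmod_mul p hk₁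
    (Nat.pos_of_ne_zero (NeZero.ne k₂))

theorem davenport_zmod_prod_zmod_prod_zmod_zero (n₁ n₂ : ℕ) :
    Davenport (ZMod n₁ × ZMod n₂ × ZMod 0) = 0 := by
  refine davenport_eq_zero_of_not_isOfFinAddOrder (g := (0, 0, 1)) ?_
  rw [isOfFinAddOrder_iff_nsmul_eq_zero]
  rintro ⟨k, hk, hk0⟩
  have := congrArg (fun x => x.2.2) hk0
  simp at this
  omega

theorem IsDavenportBound.zmod_prod_zmod_mul_prod_zmod_mul (n : ℕ) {m l d t : ℕ}
    (h : IsDavenportBound (ZMod m × ZMod l) d)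
    (hQ : IsDavenportMBound (ZMod n × ZMod n × ZMod n) d t) :
    IsDavenportBound (ZMod n × ZMod (n * m) × ZMod (n * l)) t := by
  let φ : ZMod n × ZMod (n * m) × ZMod (n * l) →+ ZMod n × ZMod n × ZMod n :=
    (AddMonoidHom.id _).prodMap ((ZMod.castHom (dvd_mul_right n m) (ZMod n)).toAddMonoidHom.prodMap
      (ZMod.castHom (dvd_mul_right n l) (ZMod n)).toAddMonoidHom)
  let ψ : ZMod m × ZMod l →+ ZMod n × ZMod (n * m) × ZMod (n * l) :=
    (AddMonoidHom.inr _ _).comp ((ZMod.scaleHom n m).prodMap (ZMod.scaleHom n l))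
  refine h.of_isDavenportMBound φ ψ ?_ hQ
  rintro ⟨x, y, z⟩ hxyz
  simp only [AddMonoidHom.mem_ker, φ, AddMonoidHom.coe_prodMap, Prod.map_apply,
    AddMonoidHom.id_apply, Prod.mk_eq_zero] at hxyz
  obtain ⟨hx, hy, hz⟩ := hxyz
  obtain ⟨v, rfl⟩ := ZMod.ker_castHom_le_range_scaleHom n m (AddMonoidHom.mem_ker.2 hy)
  obtain ⟨w, rfl⟩ := ZMod.ker_castHom_le_range_scaleHom n l (AddMonoidHom.mem_ker.2 hz)
  exact ⟨(v, w), by simp [ψ, hx]⟩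

theorem stmt_13_general (n₁ n₂ n₃ a : ℕ) (h₁₂ : n₁ ∣ n₂) (h₂₃ : n₂ ∣ n₃)
    (ha : 3 ≤ a) (hη : etaC (ZMod n₁ × ZMod n₁ × ZMod n₁) ≤ a * (n₁ - 1) + 1) :
    Davenport (ZMod n₁ × ZMod n₂ × ZMod n₃) ≤
      (n₁ - 1) + (n₂ - 1) + (n₃ - 1) + 1 + (a - 3) * (n₁ - 1) := by
  rcases Nat.eq_zero_or_pos n₃ with rfl | hn₃
  · -- `ZMod 0 = ℤ`: no length works, and `Davenport` is `sInf ∅ = 0`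
    rw [davenport_zmod_prod_zmod_prod_zmod_zero]
    exact Nat.zero_le _
  obtain ⟨m, rfl⟩ := h₁₂
  obtain ⟨l, rfl⟩ := (dvd_mul_right n₁ m).trans h₂₃
  have hn₁ : 0 < n₁ := Nat.pos_of_mul_pos_right hn₃
  have hl : 0 < l := Nat.pos_of_mul_pos_left hn₃
  have : NeZero n₁ := ⟨hn₁.ne'⟩
  have : NeZero l := ⟨hl.ne'⟩
  have hml : m ∣ l := Nat.dvd_of_mul_dvd_mul_left hn₁ h₂₃
  have hm : 0 < m := Nat.pos_of_dvd_of_pos hml hl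
  have hQ := isDavenportMBound_etaC (G := ZMod n₁ × ZMod n₁ × ZMod n₁) (m + l - 2)
  rw [show AddMonoid.exponent (ZMod n₁ × ZMod n₁ × ZMod n₁) = n₁ by
    simp [AddMonoid.exponent_prod], show m + l - 2 + 1 = m + l - 1 by omega] at hQ
  refine IsDavenportBound.davenport_le <| (isDavenportBound_zmod_prod_zmod_of_dvd hml)
    |>.zmod_prod_zmod_mul_prod_zmod_mul n₁ (hQ.mono ?_)
  have h3 : a * (n₁ - 1) = (a - 3) * (n₁ - 1) + 3 * (n₁ - 1) := by
    rw [← add_mul, Nat.sub_add_cancel ha]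
  have h2 : n₁ * (m + l - 2) + 2 * n₁ = n₁ * m + n₁ * l := by
    rw [← mul_add, mul_comm 2, ← mul_add, Nat.sub_add_cancel (by omega)]
  have : n₁ ≤ n₁ * m := Nat.le_mul_of_pos_right n₁ hm
  have : n₁ ≤ n₁ * l := Nat.le_mul_of_pos_right n₁ hl
  omega

theorem stmt_13 (n₁ n₂ n₃ a : ℕ) (h₁ : 1 < n₁) (h₁₂ : n₁ ∣ n₂) (h₂₃ : n₂ ∣ n₃)
    (ha : 3 ≤ a) (hη : etaC (ZMod n₁ × ZMod n₁ × ZMod n₁) ≤ a * (n₁ - 1) + 1) :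
    Davenport (ZMod n₁ × ZMod n₂ × ZMod n₃) ≤
      (n₁ - 1) + (n₂ - 1) + (n₃ - 1) + 1 + (a - 3) * (n₁ - 1) :=
  stmt_13_general n₁ n₂ n₃ a h₁₂ h₂₃ ha hη
end

section
/- For every set F of r primes and every n ≥ 2, the constant c(n,r) equals D(C_n^r), where c(n,r) is the least t such that any sequence of t positive integers smooth over F has a non-empty subsequence whose product is an n-th power. -/
/-- `c(n, F)`: the least `t` such that any multiset of `t` positive integers smooth over the
set of primes `F` has a non-empty sub-multiset whose product is a perfect `n`-th power. -/
noncomputable def smoothConst (n : ℕ) (F : Finset ℕ) : ℕ :=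
  sInf {t | ∀ S : Multiset ℕ, (∀ s ∈ S, 0 < s ∧ ∀ p : ℕ, p.Prime → p ∣ s → p ∈ F) →
    t ≤ Multiset.card S → ∃ T ≤ S, T ≠ 0 ∧ ∃ m : ℕ, T.prod = m ^ n}


lemma multiset_le_map {α β : Type*} [DecidableEq α] [DecidableEq β] (f : α → β) (S : Multiset α) (T : Multiset β)
    (h : T ≤ S.map f) : ∃ T' ≤ S, T'.map f = T := by
  induction T using Multiset.induction generalizing S with
  | empty => exact ⟨0, Multiset.zero_le S, rfl⟩
  | cons b T ih =>
    have hb : b ∈ S.map f := Multiset.mem_of_le h (Multiset.mem_cons_self b T)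
    obtain ⟨a, ha, hfa⟩ := Multiset.mem_map.mp hb
    have hT : T ≤ (S.erase a).map f := by
      have h1 : T ≤ (S.map f).erase b := by
        have := Multiset.erase_le_erase b h
        simpa using this
      have h2 : (S.map f).erase b = (S.erase a).map f := by
        conv_lhs => rw [← Multiset.cons_erase ha]
        rw [Multiset.map_cons, hfa, Multiset.erase_cons_head]
      rwa [h2] at h1
    obtain ⟨T', hT'le, hT'map⟩ := ih (S.erase a) hT
    refine ⟨a ::ₘ T', ?_, by rw [Multiset.map_cons, hfa, hT'map]⟩
    rw [← Multiset.cons_erase ha]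
    exact Multiset.cons_le_cons a hT'le

lemma multiset_prod_factorization (T : Multiset ℕ) (hT : ∀ t ∈ T, t ≠ 0) (p : ℕ) :
    T.prod.factorization p = (T.map (fun t => t.factorization p)).sum := by
  induction T using Multiset.induction with
  | empty => simp
  | cons a T ih =>
    have ha : a ≠ 0 := hT a (Multiset.mem_cons_self a T)
    have hprod : T.prod ≠ 0 := Multiset.prod_ne_zero (fun h => hT 0 (Multiset.mem_cons_of_mem h) rfl)
    rw [Multiset.prod_cons, Nat.factorization_mul ha hprod, Multiset.map_cons, Multiset.sum_cons]
    simp [ih (fun t ht => hT t (Multiset.mem_cons_of_mem ht))]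

lemma exists_pow_of_dvd_factorization {a n : ℕ} (ha : a ≠ 0)
    (h : ∀ p, n ∣ a.factorization p) : ∃ m, a = m ^ n := by
  refine ⟨a.factorization.prod fun p k => p ^ (k / n), ?_⟩
  rw [Finsupp.prod, ← Finset.prod_pow]
  conv_lhs => rw [← Nat.factorization_prod_pow_eq_self ha]
  rw [Finsupp.prod]
  refine Finset.prod_congr rfl fun p hp => ?_
  rw [← pow_mul, Nat.div_mul_cancel (h p)]

lemma multiset_sum_apply {ι : Type*} {M : ι → Type*} [∀ i, AddCommMonoid (M i)]
    (T : Multiset (∀ i, M i)) (i : ι) : T.sum i = (T.map (fun v => v i)).sum := by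
  induction T using Multiset.induction with
  | empty => simp
  | cons a T ih => simp [ih]


theorem stmt_18 (F : Finset ℕ) (hF : ∀ p ∈ F, p.Prime) (r : ℕ) (hr : F.card = r)
    (n : ℕ) (hn : 2 ≤ n) :
    smoothConst n F = Davenport (Fin r → ZMod n) := by
  subst hr
  have : NeZero n := ⟨by omega⟩
  set e : Fin F.card → ℕ := fun i => ((F.equivFin.symm i : ℕ)) with he
  have he_mem : ∀ i, e i ∈ F := fun i => (F.equivFin.symm i).2
  have he_prime : ∀ i, (e i).Prime := fun i => hF _ (he_mem i)
  have he_inj : Function.Injective e := fun i j h => by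
    have := F.equivFin.symm.injective (Subtype.ext h); exact this
  have he_surj : ∀ p ∈ F, ∃ i, e i = p := fun p hp => ⟨F.equivFin ⟨p, hp⟩, by simp [he]⟩
  set φ : ℕ → (Fin F.card → ZMod n) := fun s i => ((s.factorization (e i) : ℕ) : ZMod n) with hφ
  set ψ : (Fin F.card → ZMod n) → ℕ := fun v => ∏ j, (e j) ^ (v j).val with hψ
  have hψ_pos : ∀ v, 0 < ψ v := fun v =>
    Finset.prod_pos fun j _ => pow_pos (he_prime j).pos _
  -- factorization of ψ v at e i
  have hψ_fact : ∀ (v : Fin F.card → ZMod n) (i : Fin F.card),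
      (ψ v).factorization (e i) = (v i).val := by
    intro v i
    rw [hψ]
    have : (∏ j, (e j) ^ (v j).val).factorization
        = ∑ j, Finsupp.single (e j) (v j).val := by
      rw [Nat.factorization_prod (fun j _ => (pow_pos (he_prime j).pos _).ne')]
      exact Finset.sum_congr rfl fun j _ => Nat.Prime.factorization_pow (he_prime j)
    rw [this, Finsupp.finset_sum_apply]
    rw [Finset.sum_eq_single i]
    · simp
    · intro j _ hji
      rw [Finsupp.single_apply, if_neg (fun h => hji (he_inj h))]
    · simp
  unfold smoothConst Davenport
  congr 1
  ext t
  simp only [Set.mem_setOf_eq]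
  constructor
  · -- smooth property → zero-sum property
    intro hP S hcard
    obtain ⟨T, hTle, hTne, m, hTprod⟩ := hP (S.map ψ)
      (by
        intro s hs
        obtain ⟨v, hv, rfl⟩ := Multiset.mem_map.mp hs
        refine ⟨hψ_pos v, fun p pp hpd => ?_⟩
        obtain ⟨j, _, hj⟩ := pp.prime.exists_mem_finset_dvd hpd
        have : p ∣ e j := pp.dvd_of_dvd_pow hj
        rw [(Nat.prime_dvd_prime_iff_eq pp (he_prime j)).mp this]
        exact he_mem j
        )
      (by simpa using hcard)
    obtain ⟨T', hT'le, hT'map⟩ := multiset_le_map ψ S T hTle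
    refine ⟨T', hT'le, fun h => hTne (by simp [← hT'map, h]), ?_⟩
    funext i
    have hdvd : n ∣ T.prod.factorization (e i) := by
      rw [hTprod, Nat.factorization_pow]
      exact Dvd.intro _ rfl
    have hfact : T.prod.factorization (e i) = (T'.map (fun v => (v i).val)).sum := by
      rw [multiset_prod_factorization T (fun s hs => by
        obtain ⟨v, hv, rfl⟩ := Multiset.mem_map.mp (by rw [← hT'map] at hs; exact hs)
        exact (hψ_pos v).ne')]
      rw [← hT'map, Multiset.map_map]
      congr 1
      exact Multiset.map_congr rfl fun v _ => hψ_fact v i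
    rw [hfact] at hdvd
    rw [multiset_sum_apply, Pi.zero_apply]
    have : ((((T'.map (fun v => (v i).val)).sum : ℕ)) : ZMod n) = 0 := by
      rw [ZMod.natCast_eq_zero_iff]; exact hdvd
    rw [Nat.cast_multiset_sum, Multiset.map_map] at this
    rw [← this]
    congr 1
    exact Multiset.map_congr rfl fun v _ => (ZMod.natCast_rightInverse (v i)).symm
  · -- zero-sum property → smooth property
    intro hQ S hS hcard
    obtain ⟨T, hTle, hTne, hTsum⟩ := hQ (S.map φ) (by simpa using hcard)
    obtain ⟨T', hT'le, hT'map⟩ := multiset_le_map φ S T hTle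
    have hT'pos : ∀ s ∈ T', s ≠ 0 := fun s hs => (hS s (Multiset.mem_of_le hT'le hs)).1.ne'
    refine ⟨T', hT'le, fun h => hTne (by simp [← hT'map, h]), ?_⟩
    apply exists_pow_of_dvd_factorization (Multiset.prod_ne_zero (fun h => hT'pos 0 h rfl))
    intro p
    by_cases pp : p.Prime
    · by_cases hpF : p ∈ F
      · obtain ⟨i, rfl⟩ := he_surj p hpF
        have h0 : T.sum i = 0 := by rw [hTsum]; rfl
        rw [multiset_sum_apply, ← hT'map, Multiset.map_map] at h0
        have : ((((T'.map (fun s => s.factorization (e i))).sum : ℕ)) : ZMod n) = 0 := by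
          rw [Nat.cast_multiset_sum, Multiset.map_map, ← h0]
          rfl
        rw [ZMod.natCast_eq_zero_iff] at this
        rwa [multiset_prod_factorization T' hT'pos]
      · have : ¬ p ∣ T'.prod := by
          intro hpd
          obtain ⟨s, hs, hps⟩ := pp.prime.exists_mem_multiset_dvd hpd
          exact hpF ((hS s (Multiset.mem_of_le hT'le hs)).2 p pp hps)
        rw [Nat.factorization_eq_zero_of_not_dvd this]
        exact dvd_zero n
    · rw [Nat.factorization_eq_zero_of_not_prime _ pp]
      exact dvd_zero n
end
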